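/- arXiv:2012.11094 — 7 statements merged into one kernel-verified Lean document; each statement's English description precedes it below -/
import Mathlib

section
/- Let α and β be measurable spaces, let μ be a probability measure on α, ν a probability measure on β, and let π be a probability measure on α × β that is absolutely continuous with respect to the product measure μ ⊗ ν. Let π_X denote the pushforward of π under the first projection. Then ∫ (dπ_X/dμ)² dμ ≤ ∫ (dπ/d(μ⊗ν))² d(μ⊗ν); equivalently, the chi-square divergence satisfies χ²(π_X ‖ μ) ≤ χ²(π ‖ μ⊗ν). -/
/-!
Write `f = dπ/d(μ ⊗ ν)`. By Tonelli the first marginal of `π = (μ ⊗ ν).withDensity f` is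
`μ.withDensity (x ↦ ∫ f(x, y) dν)`, so `dπ_X/dμ` is the partial integral of `f` over `ν`.
Since `ν` is a probability measure, Jensen (Cauchy–Schwarz against `1`) bounds its square by
`∫ f(x, y)² dν`, and integrating over `μ` gives the claim.
-/

open MeasureTheory
open scoped ENNReal

namespace MeasureTheory

lemma sq_lintegral_le_lintegral_sq {α : Type*} [MeasurableSpace α] (μ : Measure α)
    [IsProbabilityMeasure μ] {f : α → ℝ≥0∞} (hf : AEMeasurable f μ) :
    (∫⁻ x, f x ∂μ) ^ 2 ≤ ∫⁻ x, f x ^ 2 ∂μ := by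
  have h := ENNReal.lintegral_mul_le_Lp_mul_Lq μ Real.HolderConjugate.two_two hf
    (aemeasurable_const (b := 1))
  simp only [Pi.mul_apply, mul_one, ENNReal.rpow_ofNat, one_div, one_pow, lintegral_const,
    measure_univ, ENNReal.one_rpow] at h
  simpa using (ENNReal.le_rpow_inv_iff two_pos).1 h

section Prod

variable {α β : Type*} [MeasurableSpace α] [MeasurableSpace β] (μ : Measure α) (ν : Measure β)
  [SFinite ν]

lemma lintegral_sq_lintegral_le_lintegral_prod_sq [IsProbabilityMeasure ν]
    {f : α × β → ℝ≥0∞} (hf : Measurable f) :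
    ∫⁻ x, (∫⁻ y, f (x, y) ∂ν) ^ 2 ∂μ ≤ ∫⁻ p, f p ^ 2 ∂(μ.prod ν) := by
  rw [lintegral_prod _ (hf.pow_const 2).aemeasurable]
  exact lintegral_mono fun x ↦
    sq_lintegral_le_lintegral_sq ν (hf.comp measurable_prodMk_left).aemeasurable

lemma Measure.map_fst_withDensity_prod [SFinite μ] {f : α × β → ℝ≥0∞}
    (hf : AEMeasurable f (μ.prod ν)) :
    ((μ.prod ν).withDensity f).map Prod.fst = μ.withDensity fun x ↦ ∫⁻ y, f (x, y) ∂ν := by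
  ext s hs
  rw [Measure.map_apply measurable_fst hs, withDensity_apply _ (measurable_fst hs),
    withDensity_apply _ hs, ← Set.prod_univ, ← Measure.restrict_prod_eq_prod_univ,
    lintegral_prod _ (by rw [Measure.restrict_prod_eq_prod_univ]; exact hf.restrict)]

lemma Measure.rnDeriv_map_fst_ae_eq [SigmaFinite μ] (π : Measure (α × β))
    [π.HaveLebesgueDecomposition (μ.prod ν)] (hac : π ≪ μ.prod ν) :
    (π.map Prod.fst).rnDeriv μ =ᵐ[μ] fun x ↦ ∫⁻ y, π.rnDeriv (μ.prod ν) (x, y) ∂ν := by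
  have hf := Measure.measurable_rnDeriv π (μ.prod ν)
  conv_lhs => rw [← Measure.withDensity_rnDeriv_eq π (μ.prod ν) hac,
    Measure.map_fst_withDensity_prod μ ν hf.aemeasurable]
  exact Measure.rnDeriv_withDensity μ hf.lintegral_prod_right'

end Prod

end MeasureTheory

/-- For probability measures `π ≪ μ ⊗ ν` on a product space, the chi-square
divergence of the first marginal `π_X = π ∘ fst⁻¹` with respect to `μ` is bounded by the
chi-square divergence of `π` with respect to `μ ⊗ ν`; in integral form,
`∫ (dπ_X/dμ)² dμ ≤ ∫ (dπ/d(μ⊗ν))² d(μ⊗ν)`. -/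
theorem chiSq_marginal_le {α β : Type*} [MeasurableSpace α] [MeasurableSpace β]
    (μ : Measure α) (ν : Measure β) (π : Measure (α × β))
    [IsProbabilityMeasure μ] [IsProbabilityMeasure ν] [IsProbabilityMeasure π]
    (hac : π ≪ μ.prod ν) :
    ∫⁻ x, ((π.map Prod.fst).rnDeriv μ x) ^ 2 ∂μ
      ≤ ∫⁻ p, (π.rnDeriv (μ.prod ν) p) ^ 2 ∂(μ.prod ν) := by
  calc ∫⁻ x, ((π.map Prod.fst).rnDeriv μ x) ^ 2 ∂μ
      = ∫⁻ x, (∫⁻ y, π.rnDeriv (μ.prod ν) (x, y) ∂ν) ^ 2 ∂μ :=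
        lintegral_congr_ae <| (Measure.rnDeriv_map_fst_ae_eq μ ν π hac).fun_comp (· ^ 2)
    _ ≤ ∫⁻ p, (π.rnDeriv (μ.prod ν) p) ^ 2 ∂(μ.prod ν) :=
        lintegral_sq_lintegral_le_lintegral_prod_sq μ ν (Measure.measurable_rnDeriv _ _)
end

section
/- There exists a universal constant C with the following property. Let r > 0 and T > 0 with rT ≥ C. Let (t_k)_{k≥1} be i.i.d. random variables with the exponential distribution of rate r (density r e^{−rs} on s > 0). Let N = #{n ≥ 1 : t_1 + ⋯ + t_n ≤ T} be the number of arrivals before time T, and set Ξ = Σ_{k=1}^{N} t_k² + (T − Σ_{k=1}^{N} t_k)². Then P(Ξ ≥ 4T/r) ≤ 2/(rT). -/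
/-!
Write `u = rT`, `S_m = t_0 + ⋯ + t_{m-1}` and `M = ⌈3u/2⌉`. If `S_M > T` then fewer than `M`
arrivals occur, and the last term `(T - S_N)²` is at most `t_N²`, so `Ξ ≤ ∑_{k<M} t_k²`. Hence
`{Ξ ≥ 4T/r} ⊆ {S_M ≤ T} ∪ {∑_{k<M} t_k² ≥ 4T/r}`.

The first event asks `S_M`, of mean `3T/2`, to fall below `T`; Chernoff's bound at `-r` gives
`e^{rT} 2^{-M}`. The second asks `∑_{k<M} r²t_k²`, of mean `2M ≈ 3u`, to exceed `4u`. As `t_k²` has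
no exponential moments we use Markov's inequality for the fourth power of the centred sum
`∑ (r²t_k² - 2)`, whose fourth moment is `O(M²) = O(u²)` by independence. Both bounds are at most
`1/u` once `u ≥ 10⁶`.
-/

open MeasureTheory ProbabilityTheory Real
open scoped ENNReal NNReal Nat

section Exponential

variable {r : ℝ}

lemma integral_expMeasure (hr : 0 < r) (g : ℝ → ℝ) :
    ∫ x, g x ∂expMeasure r = ∫ x in Set.Ioi 0, r * exp (-(r * x)) * g x := by
  change ∫ x, g x ∂volume.withDensity (fun x => ENNReal.ofReal (exponentialPDFReal r x)) = _
  rw [integral_withDensity_eq_integral_toReal_smul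
    (measurable_exponentialPDFReal r).ennreal_ofReal (ae_of_all _ fun _ => ENNReal.ofReal_lt_top),
    ← integral_Ici_eq_integral_Ioi, ← integral_indicator measurableSet_Ici]
  congr 1 with x
  rw [ENNReal.toReal_ofReal (exponentialPDFReal_nonneg hr x)]
  by_cases hx : 0 ≤ x <;> simp [exponentialPDFReal, gammaPDFReal, hx]

lemma integral_pow_expMeasure (hr : 0 < r) (n : ℕ) :
    ∫ x, x ^ n ∂expMeasure r = n ! / r ^ n := by
  have h := integral_rpow_mul_exp_neg_mul_Ioi (a := n + 1) (by positivity) hr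
  rw [add_sub_cancel_right, Gamma_nat_eq_factorial, ← Nat.cast_add_one, rpow_natCast] at h
  simp only [rpow_natCast] at h
  rw [integral_expMeasure hr]
  simp_rw [mul_comm (r * _) (_ ^ n), ← mul_assoc, mul_comm _ r, mul_assoc]
  rw [integral_const_mul, h, one_div_pow, pow_succ]
  field_simp

lemma integral_exp_mul_expMeasure (hr : 0 < r) {s : ℝ} (hs : s < r) :
    ∫ x, exp (s * x) ∂expMeasure r = r / (r - s) := by
  have h := integral_rpow_mul_exp_neg_mul_Ioi (a := 1) one_pos (sub_pos.2 hs)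
  simp only [sub_self, rpow_zero, one_mul, rpow_one, Gamma_one, mul_one] at h
  rw [integral_expMeasure hr]
  simp_rw [mul_assoc, ← exp_add, show ∀ x, -(r * x) + s * x = -((r - s) * x) from
    fun x => by ring]
  rw [integral_const_mul, h]
  ring

lemma ae_nonneg_expMeasure : ∀ᵐ x ∂expMeasure r, 0 ≤ x := by
  rw [ae_iff]
  simp_rw [not_le]
  exact (withDensity_apply _ measurableSet_Iio).trans (lintegral_exponentialPDF_of_nonpos le_rfl)

lemma integrable_exp_mul_expMeasure (hr : 0 < r) {s : ℝ} (hs : s < r) :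
    Integrable (fun x => exp (s * x)) (expMeasure r) :=
  Integrable.of_integral_ne_zero <| by
    rw [integral_exp_mul_expMeasure hr hs]; exact (div_pos hr (sub_pos.2 hs)).ne'

lemma zero_mem_interior_integrableExpSet_expMeasure (hr : 0 < r) :
    0 ∈ interior (integrableExpSet id (expMeasure r)) :=
  interior_mono (s := Set.Iio r) (fun _ hs => integrable_exp_mul_expMeasure hr hs)
    (by rwa [interior_Iio])

lemma integrable_pow_expMeasure (hr : 0 < r) (n : ℕ) :
    Integrable (fun x => x ^ n) (expMeasure r) :=
  integrable_pow_of_mem_interior_integrableExpSet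
    (zero_mem_interior_integrableExpSet_expMeasure hr) n

lemma sq_mul_sq_sub_two_pow_eq_sum (r x : ℝ) (n : ℕ) :
    (r ^ 2 * x ^ 2 - 2) ^ n
      = ∑ k ∈ Finset.range (n + 1), r ^ (2 * k) * (-2) ^ (n - k) * n.choose k * x ^ (2 * k) := by
  rw [sub_eq_add_neg, add_pow]
  refine Finset.sum_congr rfl fun k _ => ?_
  ring

lemma integrable_sq_mul_sq_sub_two_pow_expMeasure (hr : 0 < r) (n : ℕ) :
    Integrable (fun x => (r ^ 2 * x ^ 2 - 2) ^ n) (expMeasure r) := by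
  simp_rw [sq_mul_sq_sub_two_pow_eq_sum r _ n]
  exact integrable_finsetSum _ fun k _ => (integrable_pow_expMeasure hr _).const_mul _

lemma integral_sq_mul_sq_sub_two_pow_expMeasure (hr : 0 < r) (n : ℕ) :
    ∫ x, (r ^ 2 * x ^ 2 - 2) ^ n ∂expMeasure r
      = ∑ k ∈ Finset.range (n + 1), ((2 * k) ! : ℝ) * (-2) ^ (n - k) * n.choose k := by
  simp_rw [sq_mul_sq_sub_two_pow_eq_sum r _ n]
  rw [integral_finsetSum _ fun k _ => (integrable_pow_expMeasure hr _).const_mul _]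
  refine Finset.sum_congr rfl fun k _ => ?_
  rw [integral_const_mul, integral_pow_expMeasure hr]
  field_simp

end Exponential

section Moments

variable {Ω : Type*} [MeasurableSpace Ω] {P : Measure Ω}

lemma MeasureTheory.MemLp.integrable_pow_of_le [IsFiniteMeasure P] {f : Ω → ℝ} {p n : ℕ}
    (hf : MemLp f p P) (hn : n ≤ p) : Integrable (fun ω => f ω ^ n) P := by
  have h := (hf.mono_exponent (by exact_mod_cast hn : (n : ℝ≥0∞) ≤ p)).integrable_norm_pow'
  exact (integrable_norm_iff (f := fun ω => f ω ^ n) (hf.1.pow n)).1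
    (by simpa only [norm_pow] using h)

lemma MeasureTheory.memLp_natCast_of_integrable_pow {f : Ω → ℝ} {n : ℕ} (hn : n ≠ 0)
    (heven : Even n) (hf : AEStronglyMeasurable f P) (hint : Integrable (fun ω => f ω ^ n) P) :
    MemLp f n P := by
  rw [← integrable_norm_rpow_iff hf (by exact_mod_cast hn) (ENNReal.natCast_ne_top n)]
  simpa [rpow_natCast, heven.pow_abs] using hint

lemma measureReal_ge_le_integral_pow_div [IsFiniteMeasure P] {S : Ω → ℝ} {n : ℕ} (hn : Even n)
    (hS : MemLp S n P) {d : ℝ} (hd : 0 < d) :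
    P.real {ω | d ≤ S ω} ≤ (∫ ω, S ω ^ n ∂P) / d ^ n := by
  rw [le_div_iff₀ (by positivity), mul_comm]
  calc d ^ n * P.real {ω | d ≤ S ω} ≤ d ^ n * P.real {ω | d ^ n ≤ S ω ^ n} :=
        mul_le_mul_of_nonneg_left
          (measureReal_mono fun ω hω => pow_le_pow_left₀ hd.le hω n) (by positivity)
    _ ≤ ∫ ω, S ω ^ n ∂P := mul_meas_ge_le_integral_of_nonneg
        (ae_of_all _ fun ω => hn.pow_nonneg _) (hS.integrable_pow_of_le le_rfl) _

lemma ProbabilityTheory.IndepFun.integral_add_pow [IsFiniteMeasure P] {X Y : Ω → ℝ}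
    (hXY : IndepFun X Y P) {n : ℕ} (hX : MemLp X n P) (hY : MemLp Y n P) :
    ∫ ω, (X ω + Y ω) ^ n ∂P
      = ∑ k ∈ Finset.range (n + 1), (∫ ω, X ω ^ k ∂P) * (∫ ω, Y ω ^ (n - k) ∂P) * n.choose k := by
  have hterm : ∀ k ∈ Finset.range (n + 1),
      Integrable (fun ω => X ω ^ k * Y ω ^ (n - k)) P := fun k hk =>
    (hXY.comp (measurable_id.pow_const k) (measurable_id.pow_const (n - k))).integrable_mul
      (hX.integrable_pow_of_le (Finset.mem_range_succ_iff.1 hk))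
      (hY.integrable_pow_of_le (n.sub_le k))
  simp_rw [add_pow]
  rw [integral_finsetSum _ fun k hk => (hterm k hk).mul_const _]
  refine Finset.sum_congr rfl fun k _ => ?_
  rw [integral_mul_const, hXY.integral_fun_comp_mul_comp (f := (· ^ k)) (g := (· ^ (n - k)))
    hX.1.aemeasurable hY.1.aemeasurable (by fun_prop) (by fun_prop)]

variable {ι : Type*} {Y : ι → Ω → ℝ}

lemma ProbabilityTheory.iIndepFun.indepFun_finsetSum_of_notMem' (hY : iIndepFun Y P)
    (hmeas : ∀ i, Measurable (Y i)) {s : Finset ι} {a : ι} (ha : a ∉ s) :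
    IndepFun (Y a) (fun ω => ∑ i ∈ s, Y i ω) P := by
  simpa only [Finset.sum_fn] using (hY.indepFun_finsetSum_of_notMem hmeas ha).symm

variable [IsProbabilityMeasure P]

lemma ProbabilityTheory.IndepFun.integral_add_sq {X Y : Ω → ℝ} (hXY : IndepFun X Y P)
    (hX : MemLp X 2 P) (hY : MemLp Y 2 P) (hX0 : ∫ ω, X ω ∂P = 0) :
    ∫ ω, (X ω + Y ω) ^ 2 ∂P = ∫ ω, X ω ^ 2 ∂P + ∫ ω, Y ω ^ 2 ∂P := by
  rw [hXY.integral_add_pow hX hY]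
  simp only [Nat.reduceAdd, Finset.sum_range_succ, Finset.range_one, Finset.sum_singleton,
    pow_zero, integral_const, probReal_univ, smul_eq_mul, mul_one, tsub_zero, one_mul,
    Nat.choose_zero_right, Nat.cast_one, pow_one, hX0, Nat.add_one_sub_one, zero_mul,
    Nat.choose_succ_self_right, Nat.cast_ofNat, add_zero, tsub_self, Nat.choose_self]
  ring

lemma ProbabilityTheory.IndepFun.integral_add_pow_four {X Y : Ω → ℝ} (hXY : IndepFun X Y P)
    (hX : MemLp X 4 P) (hY : MemLp Y 4 P) (hX0 : ∫ ω, X ω ∂P = 0) (hY0 : ∫ ω, Y ω ∂P = 0) :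
    ∫ ω, (X ω + Y ω) ^ 4 ∂P
      = ∫ ω, X ω ^ 4 ∂P + 6 * (∫ ω, X ω ^ 2 ∂P) * (∫ ω, Y ω ^ 2 ∂P) + ∫ ω, Y ω ^ 4 ∂P := by
  rw [hXY.integral_add_pow hX hY]
  simp only [Nat.reduceAdd, Finset.sum_range_succ, Finset.range_one, Finset.sum_singleton,
    pow_zero, integral_const, probReal_univ, smul_eq_mul, mul_one, tsub_zero, one_mul, Nat.choose,
    Nat.cast_one, pow_one, hX0, Nat.add_one_sub_one, zero_mul, add_zero, Nat.cast_ofNat,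
    Nat.reduceSub, hY0, mul_zero, tsub_self]
  ring

lemma ProbabilityTheory.iIndepFun.integral_sum_sq (hY : iIndepFun Y P)
    (hmeas : ∀ i, Measurable (Y i)) (hL2 : ∀ i, MemLp (Y i) 2 P) (h0 : ∀ i, ∫ ω, Y i ω ∂P = 0)
    (s : Finset ι) :
    ∫ ω, (∑ i ∈ s, Y i ω) ^ 2 ∂P = ∑ i ∈ s, ∫ ω, Y i ω ^ 2 ∂P := by
  classical
  induction s using Finset.induction_on with
  | empty => simp
  | insert a s ha ih =>
    simp_rw [Finset.sum_insert ha]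
    rw [(hY.indepFun_finsetSum_of_notMem' hmeas ha).integral_add_sq (hL2 a)
      (memLp_finsetSum _ fun i _ => hL2 i) (h0 a), ih]

lemma ProbabilityTheory.iIndepFun.integral_sum_pow_four_le (hY : iIndepFun Y P)
    (hmeas : ∀ i, Measurable (Y i)) (hL4 : ∀ i, MemLp (Y i) 4 P) (h0 : ∀ i, ∫ ω, Y i ω ∂P = 0)
    (s : Finset ι) :
    ∫ ω, (∑ i ∈ s, Y i ω) ^ 4 ∂P
      ≤ ∑ i ∈ s, ∫ ω, Y i ω ^ 4 ∂P + 3 * (∑ i ∈ s, ∫ ω, Y i ω ^ 2 ∂P) ^ 2 := by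
  classical
  have hL2 : ∀ i, MemLp (Y i) 2 P := fun i => (hL4 i).mono_exponent (by norm_num)
  induction s using Finset.induction_on with
  | empty => simp
  | insert a s ha ih =>
    have hS : MemLp (fun ω => ∑ i ∈ s, Y i ω) 4 P := memLp_finsetSum _ fun i _ => hL4 i
    have hS0 : ∫ ω, ∑ i ∈ s, Y i ω ∂P = 0 := by
      rw [integral_finsetSum _ fun i _ => (hL4 i).integrable (by norm_num)]
      exact Finset.sum_eq_zero fun i _ => h0 i
    have ha2 : 0 ≤ ∫ ω, Y a ω ^ 2 ∂P := integral_nonneg fun ω => sq_nonneg _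
    simp_rw [Finset.sum_insert ha]
    rw [(hY.indepFun_finsetSum_of_notMem' hmeas ha).integral_add_pow_four (hL4 a) hS (h0 a) hS0,
      hY.integral_sum_sq hmeas hL2 h0 s]
    nlinarith

end Moments

section ArrivalCount

noncomputable def arrivalCount (a : ℕ → ℝ) (T : ℝ) : ℕ :=
  {n : ℕ | 0 < n ∧ ∑ j ∈ Finset.range n, a j ≤ T}.ncard

variable {a : ℕ → ℝ} {T : ℝ}

lemma monotone_sum_range_of_nonneg (ha : ∀ k, 0 ≤ a k) :
    Monotone fun n => ∑ j ∈ Finset.range n, a j :=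
  (Finset.sum_mono_set_of_nonneg ha).comp Finset.range_mono

lemma arrivalCount_eq (ha : ∀ k, 0 ≤ a k) {m : ℕ} (hm : ∑ j ∈ Finset.range m, a j ≤ T)
    (hm' : T < ∑ j ∈ Finset.range (m + 1), a j) : arrivalCount a T = m := by
  have hset : {n : ℕ | 0 < n ∧ ∑ j ∈ Finset.range n, a j ≤ T} = Set.Icc 1 m := by
    ext n
    refine ⟨fun ⟨hn, hnT⟩ => ⟨hn, ?_⟩,
      fun ⟨hn, hnm⟩ => ⟨hn, (monotone_sum_range_of_nonneg ha hnm).trans hm⟩⟩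
    by_contra! hmn
    exact (hnT.trans_lt hm').not_ge (monotone_sum_range_of_nonneg ha hmn)
  rw [arrivalCount, hset, ← Finset.coe_Icc, Set.ncard_coe_finset, Nat.card_Icc,
    Nat.add_sub_cancel]

lemma exists_sum_range_le_lt (hT : 0 ≤ T) {M : ℕ} (hM : T < ∑ j ∈ Finset.range M, a j) :
    ∃ m < M, ∑ j ∈ Finset.range m, a j ≤ T ∧ T < ∑ j ∈ Finset.range (m + 1), a j := by
  classical
  have hex : ∃ n, T < ∑ j ∈ Finset.range n, a j := ⟨M, hM⟩
  obtain ⟨m, hm⟩ : ∃ m, Nat.find hex = m + 1 :=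
    Nat.exists_eq_add_one_of_ne_zero fun h => by simpa [h, hT.not_gt] using Nat.find_spec hex
  refine ⟨m, ?_, ?_, hm ▸ Nat.find_spec hex⟩
  · have := Nat.find_min' hex hM
    omega
  · exact not_lt.1 (Nat.find_min hex (by omega))

lemma sum_sq_add_sq_sub_le (ha : ∀ k, 0 ≤ a k) (hT : 0 ≤ T) {M : ℕ}
    (hM : T < ∑ j ∈ Finset.range M, a j) :
    ∑ k ∈ Finset.range (arrivalCount a T), a k ^ 2
        + (T - ∑ k ∈ Finset.range (arrivalCount a T), a k) ^ 2
      ≤ ∑ k ∈ Finset.range M, a k ^ 2 := by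
  obtain ⟨m, hmM, hm, hm'⟩ := exists_sum_range_le_lt hT hM
  rw [arrivalCount_eq ha hm hm']
  rw [Finset.sum_range_succ] at hm'
  have hlast : (T - ∑ k ∈ Finset.range m, a k) ^ 2 ≤ a m ^ 2 :=
    pow_le_pow_left₀ (sub_nonneg.2 hm) (by linarith) 2
  calc ∑ k ∈ Finset.range m, a k ^ 2 + (T - ∑ k ∈ Finset.range m, a k) ^ 2
      ≤ ∑ k ∈ Finset.range (m + 1), a k ^ 2 := by
        rw [Finset.sum_range_succ]; gcongr
    _ ≤ ∑ k ∈ Finset.range M, a k ^ 2 :=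
        monotone_sum_range_of_nonneg (fun k => sq_nonneg (a k)) hmM

end ArrivalCount

section InterarrivalTails

variable {Ω : Type*} [MeasurableSpace Ω] {P : Measure Ω} {r : ℝ}

lemma integral_sq_mul_sq_sub_two_pow_of_map_eq {X : Ω → ℝ} (hX : Measurable X)
    (hlaw : P.map X = expMeasure r) (hr : 0 < r) (n : ℕ) :
    ∫ ω, (r ^ 2 * X ω ^ 2 - 2) ^ n ∂P
      = ∑ k ∈ Finset.range (n + 1), ((2 * k) ! : ℝ) * (-2) ^ (n - k) * n.choose k := by
  rw [← integral_sq_mul_sq_sub_two_pow_expMeasure hr, ← hlaw,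
    integral_map hX.aemeasurable (by fun_prop)]

lemma memLp_sq_mul_sq_sub_two_of_map_eq {X : Ω → ℝ} (hX : Measurable X)
    (hlaw : P.map X = expMeasure r) (hr : 0 < r) :
    MemLp (fun ω => r ^ 2 * X ω ^ 2 - 2) 4 P := by
  have h := integrable_sq_mul_sq_sub_two_pow_expMeasure hr 4
  rw [← hlaw] at h
  exact memLp_natCast_of_integrable_pow four_ne_zero (by decide) (by fun_prop)
    (h.comp_measurable hX)

variable [IsProbabilityMeasure P] {t : ℕ → Ω → ℝ}

lemma measureReal_sum_le_le_exp_div_two_pow (hr : 0 < r) (ht : ∀ n, Measurable (t n))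
    (hlaw : ∀ n, P.map (t n) = expMeasure r) (hindep : iIndepFun t P) (T : ℝ) (M : ℕ) :
    P.real {ω | ∑ i ∈ Finset.range M, t i ω ≤ T} ≤ exp (r * T) / 2 ^ M := by
  have hmgf : ∀ i, mgf (t i) P (-r) = 1 / 2 := fun i => by
    rw [← mgf_id_map (ht i).aemeasurable, hlaw i]
    refine (integral_exp_mul_expMeasure hr (by linarith)).trans ?_
    field_simp
    ring
  have hint : ∀ i ∈ Finset.range M, Integrable (fun ω => exp (-r * t i ω)) P := fun i _ => by
    have h := integrable_exp_mul_expMeasure hr (s := -r) (by linarith)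
    rw [← hlaw i] at h
    exact h.comp_measurable (ht i)
  have h := measure_le_le_exp_mul_mgf T (neg_nonpos.2 hr.le) (hindep.integrable_exp_mul_sum ht hint)
  rw [hindep.mgf_sum ht, Finset.prod_congr rfl fun i _ => hmgf i, Finset.prod_const,
    Finset.card_range] at h
  simpa [Finset.sum_apply, div_eq_mul_inv] using h

/-- `35088` and `20` are the fourth and second moments of `r²t² - 2`, and `1200 = 3 · 20²`. -/
lemma measureReal_le_sum_sq_le (hr : 0 < r) (ht : ∀ n, Measurable (t n))
    (hlaw : ∀ n, P.map (t n) = expMeasure r) (hindep : iIndepFun t P) (M : ℕ) {c : ℝ}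
    (hc : 2 * M < r ^ 2 * c) :
    P.real {ω | c ≤ ∑ i ∈ Finset.range M, t i ω ^ 2}
      ≤ (35088 * M + 1200 * M ^ 2) / (r ^ 2 * c - 2 * M) ^ 4 := by
  set Y : ℕ → Ω → ℝ := fun i ω => r ^ 2 * t i ω ^ 2 - 2 with hY
  have hL4 : ∀ i, MemLp (Y i) 4 P := fun i => memLp_sq_mul_sq_sub_two_of_map_eq (ht i) (hlaw i) hr
  have hmoment := fun i => integral_sq_mul_sq_sub_two_pow_of_map_eq (ht i) (hlaw i) hr
  have h0 : ∀ i, ∫ ω, Y i ω ∂P = 0 := fun i => by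
    simpa [Finset.sum_range_succ] using hmoment i 1
  have h2 : ∀ i, ∫ ω, Y i ω ^ 2 ∂P = 20 := fun i => by
    norm_num [hY, hmoment, Finset.sum_range_succ, Nat.choose, Nat.factorial]
  have h4 : ∀ i, ∫ ω, Y i ω ^ 4 ∂P = 35088 := fun i => by
    norm_num [hY, hmoment, Finset.sum_range_succ, Nat.choose, Nat.factorial]
  have hsum4 : ∫ ω, (∑ i ∈ Finset.range M, Y i ω) ^ 4 ∂P ≤ 35088 * M + 1200 * M ^ 2 := by
    have hYindep : iIndepFun Y P := hindep.comp (fun _ x => r ^ 2 * x ^ 2 - 2) fun _ => by fun_prop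
    have h := hYindep.integral_sum_pow_four_le (fun i => by fun_prop) hL4 h0 (Finset.range M)
    simp only [h2, h4, Finset.sum_const, Finset.card_range, nsmul_eq_mul] at h
    linarith
  have hsub : {ω | c ≤ ∑ i ∈ Finset.range M, t i ω ^ 2}
      ⊆ {ω | r ^ 2 * c - 2 * M ≤ ∑ i ∈ Finset.range M, Y i ω} := fun ω hω => by
    have hYsum : ∑ i ∈ Finset.range M, Y i ω
        = r ^ 2 * ∑ i ∈ Finset.range M, t i ω ^ 2 - 2 * M := by
      simp [hY, Finset.sum_sub_distrib, Finset.mul_sum, mul_comm]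
    have := mul_le_mul_of_nonneg_left hω (sq_nonneg r)
    simp only [Set.mem_ofPred_eq, hYsum]
    linarith
  calc _ ≤ P.real {ω | r ^ 2 * c - 2 * M ≤ ∑ i ∈ Finset.range M, Y i ω} := measureReal_mono hsub
    _ ≤ (∫ ω, (∑ i ∈ Finset.range M, Y i ω) ^ 4 ∂P) / (r ^ 2 * c - 2 * M) ^ 4 :=
        measureReal_ge_le_integral_pow_div (by decide) (memLp_finsetSum _ fun i _ => hL4 i)
          (by linarith)
    _ ≤ _ := by gcongr

end InterarrivalTails

section Arithmetic

lemma exp_div_two_pow_le_inv {u : ℝ} (hu : 10 ^ 6 ≤ u) {M : ℕ} (hM : 3 * u / 2 ≤ M) :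
    exp u / 2 ^ M ≤ 1 / u := by
  have hu0 : 0 < u := by linarith
  have hu_le : u ≤ exp (u / 40) := by
    have h := add_one_le_exp (u / 80)
    have hsq : exp (u / 40) = exp (u / 80) ^ 2 := by rw [← exp_nat_mul]; ring_nf
    nlinarith
  have h2M : exp u * exp (u / 40) ≤ 2 ^ M := by
    rw [← exp_add, ← exp_log (two_pos (α := ℝ)), ← exp_nat_mul]
    exact exp_le_exp.2 (by nlinarith [log_two_gt_d9])
  rw [div_le_div_iff₀ (by positivity) hu0, one_mul]
  calc exp u * u ≤ exp u * exp (u / 40) := by gcongr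
    _ ≤ 2 ^ M := h2M

lemma fourth_moment_bound_le_inv {u m : ℝ} (hu : 10 ^ 6 ≤ u) (hm1 : 3 * u / 2 ≤ m)
    (hm2 : m ≤ 3 * u / 2 + 1) :
    (35088 * m + 1200 * m ^ 2) / (4 * u - 2 * m) ^ 4 ≤ 1 / u := by
  have hu0 : 0 < u := by linarith
  have hd : (u - 2) ^ 4 ≤ (4 * u - 2 * m) ^ 4 := pow_le_pow_left₀ (by linarith) (by linarith) 4
  have hnum : 35088 * m + 1200 * m ^ 2 ≤ 2700 * u ^ 2 + 56232 * u + 36288 := by nlinarith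
  have hpoly : u * (2700 * u ^ 2 + 56232 * u + 36288) ≤ (u - 2) ^ 4 := by
    have h6 : 0 ≤ u - 10 ^ 6 := by linarith
    nlinarith [mul_nonneg (mul_nonneg h6 hu0.le) hu0.le, mul_nonneg h6 hu0.le,
      mul_nonneg (mul_nonneg (mul_nonneg h6 hu0.le) hu0.le) hu0.le]
  rw [div_le_div_iff₀ (pow_pos (by linarith) 4) hu0, one_mul]
  nlinarith

end Arithmetic

/-- Lemma 2 of the paper: there is a universal constant `C` such that for any
rate `r > 0` and horizon `T > 0` with `rT ≥ C`, if `(t_k)` are i.i.d. exponential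
inter-arrival times of rate `r`, `N` is the number of arrivals in `[0, T]`, and
`Ξ = Σ_{k=1}^N t_k² + (T − Σ_{k=1}^N t_k)²`, then `P(Ξ ≥ 4T/r) ≤ 2/(rT)`. -/
theorem sum_squares_interarrival_bound :
    ∃ C : ℝ, 0 < C ∧
      ∀ (r T : ℝ), 0 < r → 0 < T → C ≤ r * T →
      ∀ (Ω : Type) (_ : MeasurableSpace Ω) (P : Measure Ω), IsProbabilityMeasure P →
      ∀ (t : ℕ → Ω → ℝ), (∀ n, Measurable (t n)) →
      (∀ n, P.map (t n) = expMeasure r) →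
      iIndepFun t P →
      P {ω | 4 * T / r ≤
              (∑ k ∈ Finset.range
                  (Set.ncard {n : ℕ | 0 < n ∧ ∑ j ∈ Finset.range n, t j ω ≤ T}),
                (t k ω) ^ 2)
              + (T - ∑ k ∈ Finset.range
                  (Set.ncard {n : ℕ | 0 < n ∧ ∑ j ∈ Finset.range n, t j ω ≤ T}),
                  t k ω) ^ 2}
        ≤ ENNReal.ofReal (2 / (r * T)) := by
  refine ⟨10 ^ 6, by norm_num, fun r T hr hT hC Ω _ P _ t ht hlaw hindep => ?_⟩
  set u := r * T
  set M := ⌈3 * u / 2⌉₊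
  have hM1 : 3 * u / 2 ≤ M := Nat.le_ceil _
  have hM2 : (M : ℝ) ≤ 3 * u / 2 + 1 := (Nat.ceil_lt_add_one (by positivity)).le
  have hc : r ^ 2 * (4 * T / r) = 4 * u := by field_simp; ring
  have hnonneg : ∀ᵐ ω ∂P, ∀ k, 0 ≤ t k ω := ae_all_iff.2 fun k =>
    ae_of_ae_map (ht k).aemeasurable (hlaw k ▸ ae_nonneg_expMeasure)
  calc _ ≤ P ({ω | ∑ j ∈ Finset.range M, t j ω ≤ T}
          ∪ {ω | 4 * T / r ≤ ∑ k ∈ Finset.range M, t k ω ^ 2}) := by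
        refine measure_mono_ae (hnonneg.mono fun ω hω hΞ => ?_)
        by_cases hS : ∑ j ∈ Finset.range M, t j ω ≤ T
        · exact Or.inl hS
        · exact Or.inr <| hΞ.trans <|
            sum_sq_add_sq_sub_le (a := fun k => t k ω) hω hT.le (not_le.1 hS)
    _ ≤ P {ω | ∑ j ∈ Finset.range M, t j ω ≤ T}
          + P {ω | 4 * T / r ≤ ∑ k ∈ Finset.range M, t k ω ^ 2} := measure_union_le _ _
    _ ≤ ENNReal.ofReal (1 / u) + ENNReal.ofReal (1 / u) := by
        rw [← ofReal_measureReal, ← ofReal_measureReal]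
        gcongr
        · exact (measureReal_sum_le_le_exp_div_two_pow hr ht hlaw hindep T M).trans
            (exp_div_two_pow_le_inv hC hM1)
        · refine (measureReal_le_sum_sq_le hr ht hlaw hindep M (by rw [hc]; linarith)).trans ?_
          rw [hc]
          exact fourth_moment_bound_le_inv hC hM1 hM2
    _ = ENNReal.ofReal (2 / u) := by
        rw [← ENNReal.ofReal_add (by positivity) (by positivity)]
        ring_nf
end

section
/- For every integer N ≥ 0 and every real T > 0, the integral over the open simplex {(t_1,…,t_N) ∈ ℝ^N : t_i > 0 for all i, t_1 + ⋯ + t_N < T} of the function (Σ_{k=1}^N t_k² + (T − Σ_{k=1}^N t_k)²)² equals 4(N+1)(N+6) T^{N+4} / (N+4)!. (For N = 0 the integral is interpreted as the value T⁴, which equals 4·1·6·T⁴/4!.) -/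
/-!
Slicing off the first coordinate, the simplex `{t > 0, ∑ t < T}` in dimension `N + 1` fibres over
`u ∈ (0, T)` into the simplices of size `T - u` in dimension `N`, and the integrand
`Q_T(t) = ∑ tᵢ² + (T - ∑ tᵢ)²` splits as `Q_T(u, y) = u² + Q_{T-u}(y)`. Expanding `Q_T²`, the
integrals of `1`, `Q` and `Q²` over simplices satisfy a triangular recursion in `N`, each step of which
is closed by the beta integral `∫₀ᵀ uᵃ/a! · (T - u)ᵇ/b! du = T^(a+b+1)/(a+b+1)!`.
-/

open MeasureTheory Finset Set Nat

theorem integral_sub_pow_div_factorial (T : ℝ) (b : ℕ) :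
    ∫ u in (0 : ℝ)..T, (T - u) ^ b / b ! = T ^ (b + 1) / (b + 1)! := by
  rw [intervalIntegral.integral_div, intervalIntegral.integral_comp_sub_left (· ^ b), sub_self,
    sub_zero, integral_pow, Nat.factorial_succ]
  push_cast
  field_simp
  ring

theorem integral_pow_div_factorial_mul_sub_pow_div_factorial (T : ℝ) (a b : ℕ) :
    ∫ u in (0 : ℝ)..T, u ^ a / a ! * ((T - u) ^ b / b !) = T ^ (a + b + 1) / (a + b + 1)! := by
  induction a generalizing b with
  | zero => simpa using integral_sub_pow_div_factorial T b
  | succ a ih =>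
    -- `u = T - (T - u)` lowers the power of `u` at the cost of raising that of `T - u`
    have hsplit : ∀ u : ℝ, u ^ (a + 1) / (a + 1)! * ((T - u) ^ b / b !)
        = (T * (u ^ a / a ! * ((T - u) ^ b / b !))
          - (b + 1) * (u ^ a / a ! * ((T - u) ^ (b + 1) / (b + 1)!))) / (a + 1) := by
      intro u
      rw [Nat.factorial_succ, Nat.factorial_succ]
      push_cast
      field_simp
      ring
    simp_rw [hsplit]
    rw [intervalIntegral.integral_div,
      intervalIntegral.integral_sub (Continuous.intervalIntegrable (by fun_prop) _ _)
        (Continuous.intervalIntegrable (by fun_prop) _ _),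
      intervalIntegral.integral_const_mul, intervalIntegral.integral_const_mul, ih, ih,
      show a + (b + 1) + 1 = a + b + 1 + 1 by ring, show a + 1 + b + 1 = a + b + 1 + 1 by ring,
      Nat.factorial_succ (a + b + 1)]
    push_cast
    field_simp
    ring

def openSimplex (N : ℕ) (T : ℝ) : Set (Fin N → ℝ) := {t | (∀ i, 0 < t i) ∧ ∑ i, t i < T}

section openSimplex

variable {N : ℕ} {T : ℝ}

theorem openSimplex_zero (hT : 0 < T) : openSimplex 0 T = univ := by
  ext t; simp [openSimplex, hT]

theorem isOpen_openSimplex : IsOpen (openSimplex N T) := by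
  simp only [openSimplex, ofPred_and, ofPred_forall]
  exact (isOpen_iInter_of_finite fun i => isOpen_lt continuous_const (continuous_apply i)).inter
    (isOpen_lt (by fun_prop) continuous_const)

theorem measurableSet_openSimplex : MeasurableSet (openSimplex N T) :=
  isOpen_openSimplex.measurableSet

theorem openSimplex_subset_Icc : openSimplex N T ⊆ Icc 0 fun _ => T := by
  rintro t ⟨hpos, hsum⟩
  refine ⟨fun i => (hpos i).le, fun i => ?_⟩
  calc t i ≤ ∑ j, t j := single_le_sum (fun j _ => (hpos j).le) (mem_univ i)
    _ ≤ T := hsum.le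

theorem pos_of_mem_openSimplex {t : Fin N → ℝ} (ht : t ∈ openSimplex N T) : 0 < T :=
  (sum_nonneg fun i _ => (ht.1 i).le).trans_lt ht.2

theorem cons_mem_openSimplex_iff {u : ℝ} {y : Fin N → ℝ} :
    Fin.cons u y ∈ openSimplex (N + 1) T ↔ 0 < u ∧ y ∈ openSimplex N (T - u) := by
  simp only [openSimplex, mem_ofPred_eq, Fin.forall_fin_succ, Fin.cons_zero, Fin.cons_succ,
    Fin.sum_cons, lt_sub_iff_add_lt', and_assoc]

theorem Continuous.integrableOn_openSimplex {f : (Fin N → ℝ) → ℝ} (hf : Continuous f) :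
    IntegrableOn f (openSimplex N T) :=
  (hf.continuousOn.integrableOn_compact isCompact_Icc).mono_set openSimplex_subset_Icc

theorem setIntegral_openSimplex_succ {f : (Fin (N + 1) → ℝ) → ℝ}
    (hf : IntegrableOn f (openSimplex (N + 1) T)) :
    ∫ t in openSimplex (N + 1) T, f t
      = ∫ u in Ioo 0 T, ∫ y in openSimplex N (T - u), f (Fin.cons u y) := by
  have he := (volume_preserving_piFinSuccAbove (fun _ : Fin (N + 1) => ℝ) 0).symm
  rw [Measure.volume_eq_prod] at he
  have he_apply : ∀ p : ℝ × (Fin N → ℝ),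
      (MeasurableEquiv.piFinSuccAbove (fun _ => ℝ) 0).symm p = Fin.cons p.1 p.2 := by
    rintro ⟨u, y⟩
    simp [MeasurableEquiv.piFinSuccAbove_symm_apply, Fin.insertNthEquiv, Fin.insertNth_zero']
  have hint : Integrable (fun p => (openSimplex (N + 1) T).indicator f
      ((MeasurableEquiv.piFinSuccAbove (fun _ => ℝ) 0).symm p)) (volume.prod volume) :=
    (he.integrable_comp_emb (MeasurableEquiv.measurableEmbedding _)).2
      ((integrable_indicator_iff measurableSet_openSimplex).2 hf)
  rw [← integral_indicator measurableSet_openSimplex,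
    ← he.integral_comp (MeasurableEquiv.measurableEmbedding _), integral_prod _ hint,
    ← integral_indicator measurableSet_Ioo]
  congr 1 with u
  simp only [he_apply]
  by_cases hu : u ∈ Ioo 0 T
  · rw [indicator_of_mem hu, ← integral_indicator measurableSet_openSimplex]
    congr 1 with y
    by_cases hy : y ∈ openSimplex N (T - u)
    · rw [indicator_of_mem hy, indicator_of_mem (cons_mem_openSimplex_iff.2 ⟨hu.1, hy⟩)]
    · rw [indicator_of_notMem hy, indicator_of_notMem (by rw [cons_mem_openSimplex_iff]; tauto)]
  · rw [indicator_of_notMem hu, ← integral_zero (Fin N → ℝ) ℝ]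
    congr 1 with y
    refine indicator_of_notMem (fun hy => hu ?_) _
    obtain ⟨hu0, hy⟩ := cons_mem_openSimplex_iff.1 hy
    exact ⟨hu0, sub_pos.1 (pos_of_mem_openSimplex hy)⟩

theorem setIntegral_openSimplex_succ_eq_intervalIntegral (hT : 0 ≤ T)
    {f : (Fin (N + 1) → ℝ) → ℝ} (hf : IntegrableOn f (openSimplex (N + 1) T)) {g : ℝ → ℝ}
    (hg : ∀ u ∈ Ioo 0 T, ∫ y in openSimplex N (T - u), f (Fin.cons u y) = g u) :
    ∫ t in openSimplex (N + 1) T, f t = ∫ u in (0 : ℝ)..T, g u := by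
  rw [setIntegral_openSimplex_succ hf, setIntegral_congr_fun measurableSet_Ioo hg,
    intervalIntegral.integral_of_le hT, integral_Ioc_eq_integral_Ioo]

theorem volume_real_openSimplex (hT : 0 < T) : volume.real (openSimplex N T) = T ^ N / N ! := by
  induction N generalizing T with
  | zero => simp [openSimplex_zero hT, measureReal_def, volume_pi]
  | succ N ih =>
    calc volume.real (openSimplex (N + 1) T) = ∫ _ in openSimplex (N + 1) T, (1 : ℝ) := by simp
      _ = ∫ u in (0 : ℝ)..T, (T - u) ^ N / N ! :=
        setIntegral_openSimplex_succ_eq_intervalIntegral hT.le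
          continuous_const.integrableOn_openSimplex fun u hu => by
            rw [setIntegral_const, ih (sub_pos.2 hu.2), smul_eq_mul, mul_one]
      _ = T ^ (N + 1) / (N + 1)! := integral_sub_pow_div_factorial T N

theorem setIntegral_openSimplex_zero (hT : 0 < T) (f : (Fin 0 → ℝ) → ℝ) :
    ∫ t in openSimplex 0 T, f t = f 0 := by
  rw [openSimplex_zero hT, setIntegral_univ, integral_unique]
  simp [measureReal_def, volume_pi, Unique.eq_default (0 : Fin 0 → ℝ)]

end openSimplex

def barycentricSqNorm {N : ℕ} (T : ℝ) (t : Fin N → ℝ) : ℝ := ∑ i, t i ^ 2 + (T - ∑ i, t i) ^ 2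

section barycentricSqNorm

variable {N : ℕ} {T : ℝ}

@[fun_prop]
theorem continuous_barycentricSqNorm : Continuous (barycentricSqNorm (N := N) T) := by
  unfold barycentricSqNorm; fun_prop

theorem barycentricSqNorm_cons (u : ℝ) (y : Fin N → ℝ) :
    barycentricSqNorm T (Fin.cons u y) = u ^ 2 + barycentricSqNorm (T - u) y := by
  simp only [barycentricSqNorm, Fin.sum_univ_succ, Fin.cons_zero, Fin.cons_succ]
  ring

theorem integral_barycentricSqNorm (hT : 0 < T) :
    ∫ t in openSimplex N T, barycentricSqNorm T t = 2 * (N + 1) * T ^ (N + 2) / (N + 2)! := by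
  induction N generalizing T with
  | zero => simp [setIntegral_openSimplex_zero hT, barycentricSqNorm]
  | succ N ih =>
    rw [setIntegral_openSimplex_succ_eq_intervalIntegral hT.le
      (by fun_prop : Continuous (barycentricSqNorm T)).integrableOn_openSimplex
      (g := fun u => 2 * (u ^ 2 / 2! * ((T - u) ^ N / N !))
        + 2 * (N + 1) * ((T - u) ^ (N + 2) / (N + 2)!))]
    · simp (disch := (apply Continuous.intervalIntegrable; fun_prop)) only
        [intervalIntegral.integral_add, intervalIntegral.integral_const_mul,
        integral_pow_div_factorial_mul_sub_pow_div_factorial, integral_sub_pow_div_factorial]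
      push_cast
      ring_nf
    · intro u hu
      have hTu : 0 < T - u := sub_pos.2 hu.2
      simp only [barycentricSqNorm_cons]
      rw [integral_add continuous_const.integrableOn_openSimplex
          (Continuous.integrableOn_openSimplex (by fun_prop)),
        setIntegral_const, volume_real_openSimplex hTu, ih hTu, smul_eq_mul]
      push_cast [Nat.factorial]
      ring

theorem setIntegral_openSimplex_add_barycentricSqNorm_sq (c : ℝ) :
    ∫ y in openSimplex N T, (c + barycentricSqNorm T y) ^ 2
      = c ^ 2 * volume.real (openSimplex N T)
        + 2 * c * (∫ y in openSimplex N T, barycentricSqNorm T y)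
        + ∫ y in openSimplex N T, barycentricSqNorm T y ^ 2 := by
  simp only [add_sq]
  rw [integral_add (Continuous.integrableOn_openSimplex (by fun_prop))
      (Continuous.integrableOn_openSimplex (by fun_prop)),
    integral_add continuous_const.integrableOn_openSimplex
      (Continuous.integrableOn_openSimplex (by fun_prop)),
    setIntegral_const, integral_const_mul, smul_eq_mul, mul_comm]

end barycentricSqNorm

/-- For every `N ≥ 0` and `T > 0`, the integral over the open simplex
`{t ∈ ℝ^N : t_i > 0, t_1 + ⋯ + t_N < T}` of `(Σ t_k² + (T − Σ t_k)²)²` equals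
`4(N+1)(N+6) T^(N+4) / (N+4)!`. -/
theorem simplex_integral_I2 (N : ℕ) (T : ℝ) (hT : 0 < T) :
    ∫ t in {t : Fin N → ℝ | (∀ i, 0 < t i) ∧ ∑ i, t i < T},
        ((∑ i, (t i) ^ 2) + (T - ∑ i, t i) ^ 2) ^ 2
      = 4 * (N + 1) * (N + 6) * T ^ (N + 4) / (N + 4).factorial := by
  change ∫ t in openSimplex N T, barycentricSqNorm T t ^ 2 = _
  induction N generalizing T with
  | zero =>
    rw [setIntegral_openSimplex_zero hT]
    simp only [barycentricSqNorm, Fin.sum_univ_zero]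
    push_cast [Nat.factorial]
    ring
  | succ N ih =>
    -- the fibre integral `u⁴ |S| + 2u² ∫ Q + ∫ Q²`, written as a combination of beta integrands
    rw [setIntegral_openSimplex_succ_eq_intervalIntegral hT.le
      (by fun_prop : Continuous fun t => barycentricSqNorm T t ^ 2).integrableOn_openSimplex
      (g := fun u => 24 * (u ^ 4 / 4! * ((T - u) ^ N / N !))
        + 8 * (N + 1) * (u ^ 2 / 2! * ((T - u) ^ (N + 2) / (N + 2)!))
        + 4 * (N + 1) * (N + 6) * ((T - u) ^ (N + 4) / (N + 4)!))]
    · simp (disch := (apply Continuous.intervalIntegrable; fun_prop)) only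
        [intervalIntegral.integral_add, intervalIntegral.integral_const_mul,
        integral_pow_div_factorial_mul_sub_pow_div_factorial, integral_sub_pow_div_factorial]
      push_cast
      ring_nf
    · intro u hu
      have hTu : 0 < T - u := sub_pos.2 hu.2
      simp only [barycentricSqNorm_cons]
      rw [setIntegral_openSimplex_add_barycentricSqNorm_sq, volume_real_openSimplex hTu,
        integral_barycentricSqNorm hTu, ih (T - u) hTu]
      push_cast [Nat.factorial]
      ring
end

section
/- Let d ≥ 1 and let U : ℝ^d → ℝ be twice continuously differentiable with m‖v‖² ≤ ⟨v, ∇²U(x)v⟩ ≤ L‖v‖² for all x, v ∈ ℝ^d, where 0 < m ≤ 1 ≤ L, U having its unique minimizer at x = 0 with U(0) = 0. Let μ be the probability measure on ℝ^d with density Z⁻¹ e^{−U(x)} with respect to Lebesgue measure, where Z = ∫_{ℝ^d} e^{−U(x)} dx. Then for every i ∈ {1,…,d} and every c > 0, μ({x ∈ ℝ^d : |∂_{x_i} U(x)| ≥ 2√L + 2c√L · log d}) ≤ 3 d^{−c}. -/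
/-!
Taylor's bound `U (x + w) ≤ U x + DU x w + L ‖w‖² / 2` shows that wherever `∂ᵥU ≥ s`, the density
`e^{-U}` at `x` is at most `e^{-s²/(2L)}` times the density at the translate `x - (s/L) v`. Since
Lebesgue measure is translation invariant, the set `{∂ᵥU ≥ s}` therefore has mass at most
`e^{-s²/(2L)}`. Adding the two signs gives `2 e^{-s²/(2L)}`, which is at most `2 d^{-c}` when
`s = 2√L (1 + c log d)`.
-/

open MeasureTheory Real Set
open scoped ENNReal

lemma le_quadratic_of_hasDerivAt_of_deriv_le {f f' f'' : ℝ → ℝ} {C : ℝ}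
    (hf : ∀ t, HasDerivAt f (f' t) t) (hf' : ∀ t, HasDerivAt f' (f'' t) t)
    (hC : ∀ t, f'' t ≤ C) (t : ℝ) :
    f t ≤ f 0 + f' 0 * t + C / 2 * t ^ 2 := by
  set g : ℝ → ℝ := fun t => f 0 + f' 0 * t + C / 2 * t ^ 2 - f t
  have hg : ∀ t, HasDerivAt g (f' 0 + C * t - f' t) t := fun t => by
    have := ((((hasDerivAt_id' t).const_mul (f' 0)).const_add (f 0)).fun_add
      ((hasDerivAt_pow 2 t).const_mul (C / 2))).fun_sub (hf t)
    exact this.congr_deriv (by simp; ring)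
  have hg'_mono : Monotone (fun t => f' 0 + C * t - f' t) := by
    refine monotone_of_hasDerivAt_nonneg (f' := fun t => C - f'' t) (fun t => ?_)
      fun t => sub_nonneg.2 (hC t)
    simpa using (((hasDerivAt_id' t).const_mul C).const_add (f' 0)).fun_sub (hf' t)
  have hconv : ConvexOn ℝ univ g := by
    refine Monotone.convexOn_univ_of_deriv (fun t => (hg t).differentiableAt) ?_
    rwa [show deriv g = _ from funext fun t => (hg t).deriv]
  have hmin : IsMinOn g univ 0 := hconv.isMinOn_of_rightDeriv_eq_zero (by simp) <| by
    rw [(hg 0).hasDerivWithinAt.derivWithin (uniqueDiffWithinAt_Ioi 0)]; ring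
  have := hmin (mem_univ t)
  simp only [g, mem_ofPred_eq] at this
  linarith

section LineRestriction

variable {E F : Type*} [NormedAddCommGroup E] [NormedSpace ℝ E] [NormedAddCommGroup F]
  [NormedSpace ℝ F]

lemma Differentiable.hasDerivAt_apply_add_smul {f : E → F} (hf : Differentiable ℝ f) (x v : E)
    (t : ℝ) : HasDerivAt (fun t : ℝ => f (x + t • v)) (fderiv ℝ f (x + t • v) v) t :=
  (hf _).hasFDerivAt.comp_hasDerivAt t <| by
    simpa using ((hasDerivAt_id t).smul_const v).const_add x

variable {U : E → ℝ}

lemma ContDiff.hasDerivAt_fderiv_apply_add_smul (hU : ContDiff ℝ 2 U) (x v : E) (t : ℝ) :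
    HasDerivAt (fun t : ℝ => fderiv ℝ U (x + t • v) v)
      (iteratedFDeriv ℝ 2 U (x + t • v) ![v, v]) t := by
  have hDU : Differentiable ℝ (fderiv ℝ U) :=
    (hU.fderiv_right (m := 1) le_rfl).differentiable one_ne_zero
  rw [iteratedFDeriv_two_apply]
  exact (ContinuousLinearMap.apply ℝ ℝ v).hasFDerivAt.comp_hasDerivAt t
    (hDU.hasDerivAt_apply_add_smul x v t)

lemma ContDiff.apply_add_smul_le (hU : ContDiff ℝ 2 U) {x v : E} {C : ℝ}
    (hC : ∀ y, iteratedFDeriv ℝ 2 U y ![v, v] ≤ C) (t : ℝ) :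
    U (x + t • v) ≤ U x + fderiv ℝ U x v * t + C / 2 * t ^ 2 := by
  simpa using le_quadratic_of_hasDerivAt_of_deriv_le
    ((hU.differentiable two_ne_zero).hasDerivAt_apply_add_smul x v)
    (hU.hasDerivAt_fderiv_apply_add_smul x v) (fun t => hC _) t

end LineRestriction

lemma withDensity_apply_le_mul_univ_of_forall_le {G : Type*} [AddGroup G] [MeasurableSpace G]
    [MeasurableAdd G] (ν : Measure G) [SFinite ν] [ν.IsAddRightInvariant] {ρ : G → ℝ≥0∞}
    (hρ : Measurable ρ) {A : Set G} (w : G) (B : ℝ≥0∞) (h : ∀ x ∈ A, ρ x ≤ B * ρ (x + w)) :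
    ν.withDensity ρ A ≤ B * ν.withDensity ρ univ :=
  calc ν.withDensity ρ A = ∫⁻ x in A, ρ x ∂ν := withDensity_apply' ρ A
    _ ≤ ∫⁻ x in A, B * ρ (x + w) ∂ν := setLIntegral_mono (by fun_prop) h
    _ ≤ ∫⁻ x, B * ρ (x + w) ∂ν := setLIntegral_le_lintegral _ _
    _ = B * ν.withDensity ρ univ := by
      rw [lintegral_const_mul _ (by fun_prop), lintegral_add_right_eq_self ρ w,
        withDensity_apply _ MeasurableSet.univ, Measure.restrict_univ]

section GibbsTail

variable {E : Type*} [NormedAddCommGroup E] [NormedSpace ℝ E] [MeasurableSpace E]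
  [BorelSpace E]
  (ν : Measure E) [SFinite ν] [ν.IsAddRightInvariant] {U : E → ℝ}

lemma tilted_neg_fderiv_ge_le (hU : ContDiff ℝ 2 U) {v : E} {C : ℝ} (hC0 : 0 < C)
    (hC : ∀ y, iteratedFDeriv ℝ 2 U y ![v, v] ≤ C) {s : ℝ} (hs : 0 ≤ s) :
    ν.tilted (fun x => -U x) {x | s ≤ fderiv ℝ U x v} ≤
      ENNReal.ofReal (exp (-(s ^ 2 / (2 * C)))) := by
  have hUm : Measurable U := hU.continuous.measurable
  set Z := ∫ x, exp (-U x) ∂ν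
  have hZ : 0 ≤ Z := integral_nonneg fun x => (exp_pos _).le
  have hshift : ∀ x, s ≤ fderiv ℝ U x v →
      exp (-U x) / Z ≤ exp (-(s ^ 2 / (2 * C))) * (exp (-U (x + (-(s / C)) • v)) / Z) := by
    intro x hx
    -- `s / C` is the optimal parameter of this Chernoff bound
    have hTaylor := hU.apply_add_smul_le (x := x) hC (-(s / C))
    have hslope : s * (s / C) ≤ fderiv ℝ U x v * (s / C) := by gcongr
    have hquad : C / 2 * (-(s / C)) ^ 2 = s * (s / C) - s ^ 2 / (2 * C) := by
      field_simp; ring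
    rw [← mul_div_assoc, ← exp_add]
    exact div_le_div_of_nonneg_right (exp_le_exp.2 (by linarith)) hZ
  calc ν.tilted (fun x => -U x) {x | s ≤ fderiv ℝ U x v}
      ≤ ENNReal.ofReal (exp (-(s ^ 2 / (2 * C)))) * ν.tilted (fun x => -U x) univ := by
        refine withDensity_apply_le_mul_univ_of_forall_le ν (by fun_prop) ((-(s / C)) • v) _
          fun x hx => ?_
        rw [← ENNReal.ofReal_mul (exp_pos _).le]
        exact ENNReal.ofReal_le_ofReal (hshift x hx)
    -- a tilted measure is a probability measure, or `0` if `exp ∘ f` is not integrable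
    _ ≤ ENNReal.ofReal (exp (-(s ^ 2 / (2 * C)))) := mul_le_of_le_one_right' prob_le_one

lemma tilted_neg_abs_fderiv_ge_le (hU : ContDiff ℝ 2 U) {L : ℝ} (hL : 0 < L)
    (hsmooth : ∀ y u, iteratedFDeriv ℝ 2 U y ![u, u] ≤ L * ‖u‖ ^ 2) {v : E} (hv : ‖v‖ = 1)
    {s : ℝ} (hs : 0 ≤ s) :
    ν.tilted (fun x => -U x) {x | s ≤ |fderiv ℝ U x v|} ≤
      ENNReal.ofReal (2 * exp (-(s ^ 2 / (2 * L)))) := by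
  have hsplit : {x | s ≤ |fderiv ℝ U x v|} ⊆
      {x | s ≤ fderiv ℝ U x v} ∪ {x | s ≤ fderiv ℝ U x (-v)} := fun x hx => by
    rcases le_abs.1 (show s ≤ |fderiv ℝ U x v| from hx) with h | h
    · exact Or.inl h
    · exact Or.inr (by simpa using h)
  have htail : ∀ u : E, ‖u‖ = 1 → ν.tilted (fun x => -U x) {x | s ≤ fderiv ℝ U x u} ≤
      ENNReal.ofReal (exp (-(s ^ 2 / (2 * L)))) := fun u hu =>
    tilted_neg_fderiv_ge_le ν hU hL (fun y => by simpa [hu] using hsmooth y u) hs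
  calc _ ≤ _ := measure_mono hsplit
    _ ≤ _ := measure_union_le _ _
    _ ≤ _ := add_le_add (htail v hv) (htail (-v) (by rwa [norm_neg]))
    _ = _ := by rw [← ENNReal.ofReal_add (by positivity) (by positivity), ← two_mul]

end GibbsTail

lemma exp_neg_sq_div_le_rpow_neg {L d : ℝ} (hL : 0 < L) (hd : 0 < d) (c : ℝ) :
    exp (-((2 * √L + 2 * c * √L * log d) ^ 2 / (2 * L))) ≤ d ^ (-c) := by
  have hsq : (2 * √L + 2 * c * √L * log d) ^ 2 / (2 * L) = 2 * (1 + c * log d) ^ 2 := by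
    rw [div_eq_iff (by positivity)]
    linear_combination (4 * (1 + c * log d) ^ 2) * sq_sqrt hL.le
  rw [hsq, rpow_def_of_pos hd, exp_le_exp]
  nlinarith [sq_nonneg (c * log d + 3 / 4)]

theorem concentration_partial_deriv_general (d : ℕ) (hd : 1 ≤ d) (m L : ℝ)
    (hL : 1 ≤ L)
    (U : EuclideanSpace ℝ (Fin d) → ℝ)
    (hU : ContDiff ℝ 2 U)
    (hHess : ∀ x v : EuclideanSpace ℝ (Fin d),
      m * ‖v‖ ^ 2 ≤ iteratedFDeriv ℝ 2 U x ![v, v] ∧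
      iteratedFDeriv ℝ 2 U x ![v, v] ≤ L * ‖v‖ ^ 2)
    (μ : Measure (EuclideanSpace ℝ (Fin d)))
    (hμ : μ = volume.withDensity (fun x =>
      ENNReal.ofReal ((∫ y, Real.exp (-U y))⁻¹ * Real.exp (-U x))))
    (i : Fin d) (c : ℝ) (hc : 0 < c) :
    μ {x | 2 * Real.sqrt L + 2 * c * Real.sqrt L * Real.log d
            ≤ |fderiv ℝ U x (EuclideanSpace.single i 1)|}
      ≤ ENNReal.ofReal (3 * (d : ℝ) ^ (-c)) := by
  have hL0 : 0 < L := by linarith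
  have hμ_tilted : μ = volume.tilted (fun x => -U x) := by
    simp_rw [hμ, Measure.tilted, div_eq_inv_mul]
  have hs : 0 ≤ 2 * √L + 2 * c * √L * log d := by
    have := log_natCast_nonneg d
    positivity
  have hd_pos : (0 : ℝ) < d := by exact_mod_cast hd
  rw [hμ_tilted]
  refine (tilted_neg_abs_fderiv_ge_le volume hU hL0 (fun y u => (hHess y u).2)
    (by simp) hs).trans (ENNReal.ofReal_le_ofReal ?_)
  linarith [exp_neg_sq_div_le_rpow_neg hL0 hd_pos c, rpow_nonneg hd_pos.le (-c)]

/-- concentration of partial derivatives, Lemma 5 of the paper: under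
Assumption 1 (`m·Id ≤ ∇²U ≤ L·Id`, `0 < m ≤ 1 ≤ L`, unique minimizer `0`, `U(0) = 0`),
with `μ = Z⁻¹ e^{−U} dx`, for every coordinate `i` and every `c > 0`,
`μ(|∂_{x_i}U| ≥ 2√L + 2c√L log d) ≤ 3 d^{−c}`. -/
theorem concentration_partial_deriv (d : ℕ) (hd : 1 ≤ d) (m L : ℝ)
    (hm : 0 < m) (hm1 : m ≤ 1) (hL : 1 ≤ L)
    (U : EuclideanSpace ℝ (Fin d) → ℝ)
    (hU : ContDiff ℝ 2 U)
    (hHess : ∀ x v : EuclideanSpace ℝ (Fin d),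
      m * ‖v‖ ^ 2 ≤ iteratedFDeriv ℝ 2 U x ![v, v] ∧
      iteratedFDeriv ℝ 2 U x ![v, v] ≤ L * ‖v‖ ^ 2)
    (hU0 : U 0 = 0) (hUmin : ∀ x ≠ 0, 0 < U x)
    (μ : Measure (EuclideanSpace ℝ (Fin d)))
    (hμ : μ = volume.withDensity (fun x =>
      ENNReal.ofReal ((∫ y, Real.exp (-U y))⁻¹ * Real.exp (-U x))))
    (i : Fin d) (c : ℝ) (hc : 0 < c) :
    μ {x | 2 * Real.sqrt L + 2 * c * Real.sqrt L * Real.log d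
            ≤ |fderiv ℝ U x (EuclideanSpace.single i 1)|}
      ≤ ENNReal.ofReal (3 * (d : ℝ) ^ (-c)) :=
  concentration_partial_deriv_general d hd m L hL U hU hHess μ hμ i c hc
end

section
/- For all reals A, B > 0, ∫_0^∞ s(A + 2Bs) e^{−As − Bs²} ds ≥ 1/(4A) + B/(2A³) − (3A/(2B) + 5/(4A) + B/(2A³)) e^{−2A²/B}. In particular, this integral is the expectation of a random variable with survival function P(t ≥ s) = exp(−As − Bs²) for s ≥ 0. -/
/-!
Since `exp (-A s - B s²) ≥ exp (-2 A s)` for `0 ≤ s ≤ A / B`, and the integrand is nonnegative,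
the integral is at least `∫₀^{A/B} s (A + 2 B s) exp (-2 A s) ds`, whose elementary
antiderivative evaluates to the stated bound.
-/

open MeasureTheory Real Set

lemma integrableOn_mul_exp_neg_quadratic {A B : ℝ} (hA : 0 ≤ A) (hB : 0 < B) :
    IntegrableOn (fun s => s * (A + 2 * B * s) * exp (-A * s - B * s ^ 2)) (Ioi 0) := by
  have hdom : IntegrableOn
      (fun s : ℝ => A * (s ^ (1 : ℝ) * exp (-B * s ^ 2)) + 2 * B * (s ^ (2 : ℝ) * exp (-B * s ^ 2)))
      (Ioi 0) :=
    ((integrableOn_rpow_mul_exp_neg_mul_sq hB (by norm_num)).const_mul A).add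
      ((integrableOn_rpow_mul_exp_neg_mul_sq hB (by norm_num)).const_mul (2 * B))
  refine hdom.mono' (by fun_prop : Continuous _).aestronglyMeasurable.restrict ?_
  rw [ae_restrict_iff' measurableSet_Ioi]
  filter_upwards with s (hs : 0 < s)
  rw [rpow_one, rpow_two, norm_of_nonneg (by positivity)]
  calc s * (A + 2 * B * s) * exp (-A * s - B * s ^ 2)
      ≤ s * (A + 2 * B * s) * exp (-B * s ^ 2) := by gcongr; nlinarith
    _ = _ := by ring

lemma exp_neg_two_mul_le_exp_neg_quadratic {A B s : ℝ} (hs : 0 ≤ s) (hBs : B * s ≤ A) :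
    exp (-2 * A * s) ≤ exp (-A * s - B * s ^ 2) :=
  exp_le_exp.2 (by nlinarith)

noncomputable def primitiveMulExpNegTwoMul (A B s : ℝ) : ℝ :=
  -exp (-2 * A * s) * (B / A * s ^ 2 + (B / A ^ 2 + 1 / 2) * s + (B / (2 * A ^ 3) + 1 / (4 * A)))

lemma hasDerivAt_primitiveMulExpNegTwoMul {A : ℝ} (hA : A ≠ 0) (B s : ℝ) :
    HasDerivAt (primitiveMulExpNegTwoMul A B) (s * (A + 2 * B * s) * exp (-2 * A * s)) s := by
  have hexp : HasDerivAt (fun s => exp (-2 * A * s)) (exp (-2 * A * s) * (-2 * A)) s := by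
    simpa using ((hasDerivAt_id s).const_mul (-2 * A)).exp
  have hpoly : HasDerivAt
      (fun s => B / A * s ^ 2 + (B / A ^ 2 + 1 / 2) * s + (B / (2 * A ^ 3) + 1 / (4 * A)))
      (B / A * (2 * s) + (B / A ^ 2 + 1 / 2)) s := by
    simpa using (((hasDerivAt_pow 2 s).const_mul (B / A)).add
      ((hasDerivAt_id s).const_mul (B / A ^ 2 + 1 / 2))).add_const (B / (2 * A ^ 3) + 1 / (4 * A))
  refine (hexp.neg.mul hpoly).congr_deriv ?_
  simp only [Pi.neg_apply]
  field_simp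
  ring

lemma integral_Ioc_mul_exp_neg_two_mul {A : ℝ} (hA : A ≠ 0) (B : ℝ) {T : ℝ} (hT : 0 ≤ T) :
    ∫ s in Ioc 0 T, s * (A + 2 * B * s) * exp (-2 * A * s) =
      primitiveMulExpNegTwoMul A B T - primitiveMulExpNegTwoMul A B 0 := by
  rw [← intervalIntegral.integral_of_le hT]
  exact intervalIntegral.integral_eq_sub_of_hasDerivAt
    (fun s _ => hasDerivAt_primitiveMulExpNegTwoMul hA B s)
    ((by fun_prop : Continuous fun s => s * (A + 2 * B * s) * exp (-2 * A * s)).intervalIntegrable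
      0 T)

/-- For all `A, B > 0`,
`∫_0^∞ s(A + 2Bs) e^{−As − Bs²} ds ≥ 1/(4A) + B/(2A³) − (3A/(2B) + 5/(4A) + B/(2A³)) e^{−2A²/B}`.
This integral is the expectation of a random variable with survival function
`exp(−As − Bs²)`. -/
theorem expectation_lower_bound (A B : ℝ) (hA : 0 < A) (hB : 0 < B) :
    (∫ s in Set.Ioi (0 : ℝ), s * (A + 2 * B * s) * Real.exp (-A * s - B * s ^ 2))
      ≥ 1 / (4 * A) + B / (2 * A ^ 3)
        - (3 * A / (2 * B) + 5 / (4 * A) + B / (2 * A ^ 3)) * Real.exp (-2 * A ^ 2 / B) := by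
  have hint := integrableOn_mul_exp_neg_quadratic hA.le hB
  have hT : 0 ≤ A / B := by positivity
  have hvalue : primitiveMulExpNegTwoMul A B (A / B) - primitiveMulExpNegTwoMul A B 0 =
      1 / (4 * A) + B / (2 * A ^ 3)
        - (3 * A / (2 * B) + 5 / (4 * A) + B / (2 * A ^ 3)) * exp (-2 * A ^ 2 / B) := by
    rw [primitiveMulExpNegTwoMul, primitiveMulExpNegTwoMul,
      show -2 * A * (A / B) = -2 * A ^ 2 / B by ring, mul_zero, exp_zero]
    field_simp
    ring
  calc (∫ s in Ioi 0, s * (A + 2 * B * s) * exp (-A * s - B * s ^ 2))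
      ≥ ∫ s in Ioc 0 (A / B), s * (A + 2 * B * s) * exp (-A * s - B * s ^ 2) :=
        setIntegral_mono_set hint
          (ae_restrict_of_forall_mem measurableSet_Ioi fun s (hs : 0 < s) => by positivity)
          Ioc_subset_Ioi_self.eventuallyLE
    _ ≥ ∫ s in Ioc 0 (A / B), s * (A + 2 * B * s) * exp (-2 * A * s) :=
        setIntegral_mono_on (by fun_prop : Continuous _).integrableOn_Ioc
          (hint.mono_set Ioc_subset_Ioi_self) measurableSet_Ioc fun s ⟨hs, hsT⟩ => by
            have hBs : B * s ≤ A := by rwa [le_div_iff₀' hB] at hsT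
            exact mul_le_mul_of_nonneg_left (exp_neg_two_mul_le_exp_neg_quadratic hs.le hBs)
              (by positivity)
    _ = _ := by rw [integral_Ioc_mul_exp_neg_two_mul hA.ne' B hT, hvalue]
end

section
/- Let d ≥ 1 and let U : ℝ^d → ℝ be twice continuously differentiable with m‖v‖² ≤ ⟨v, ∇²U(x)v⟩ ≤ L‖v‖² for all x, v ∈ ℝ^d, where 0 < m ≤ 1 ≤ L, U having its unique minimizer at x = 0 with U(0) = 0. Let μ be the probability measure with density Z⁻¹ e^{−U(x)} with respect to Lebesgue measure, Z = ∫ e^{−U}, and let μ₀ be the Gaussian measure on ℝ^d with density (L/(2π))^{d/2} e^{−L‖x‖²/2}. Then the Kullback–Leibler divergence satisfies KL(μ₀ ‖ μ) ≤ (d/2) · log(L/m). -/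
open MeasureTheory Real

/-!
Along each ray, `t ↦ U (t • x)` vanishes to first order at `0` and has second derivative between
`m ‖x‖²` and `L ‖x‖²`, so `m ‖x‖² / 2 ≤ U x ≤ L ‖x‖² / 2`. Writing `c = (L / 2π)^{d/2}` and
`Z = ∫ e^{-U}`, the log-density `log (dμ₀/dμ) x = log c + log Z + U x - L ‖x‖² / 2` is therefore
at most `log c + log Z`, and the lower quadratic bound gives `Z ≤ (2π / m)^{d/2}`, so the
integrand is bounded pointwise by `(d / 2) log (L / m)`.
-/

section Gaussian

variable {V : Type*} [NormedAddCommGroup V] [InnerProductSpace ℝ V] [FiniteDimensional ℝ V]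
  [MeasurableSpace V] [BorelSpace V]

lemma integrable_exp_neg_mul_sq_norm {b : ℝ} (hb : 0 < b) :
    Integrable fun x : V ↦ exp (-b * ‖x‖ ^ 2) :=
  Integrable.of_integral_ne_zero <| by
    rw [GaussianFourier.integral_rexp_neg_mul_sq_norm hb]; positivity

lemma isProbabilityMeasure_withDensity_gaussian {L : ℝ} (hL : 0 < L) :
    IsProbabilityMeasure (volume.withDensity fun x : V ↦ ENNReal.ofReal
      ((L / (2 * π)) ^ ((Module.finrank ℝ V : ℝ) / 2) * exp (-L * ‖x‖ ^ 2 / 2))) := by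
  have hexp : (fun x : V ↦ exp (-L * ‖x‖ ^ 2 / 2)) = fun x ↦ exp (-(L / 2) * ‖x‖ ^ 2) := by
    ext x; ring_nf
  constructor
  rw [withDensity_apply _ MeasurableSet.univ, Measure.restrict_univ,
    ← ofReal_integral_eq_lintegral_ofReal, integral_const_mul, hexp,
    GaussianFourier.integral_rexp_neg_mul_sq_norm (by positivity), ← mul_rpow (by positivity)
    (by positivity), show L / (2 * π) * (π / (L / 2)) = 1 by field_simp, one_rpow,
    ENNReal.ofReal_one]
  · exact (hexp ▸ integrable_exp_neg_mul_sq_norm (V := V) (by positivity)).const_mul _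
  · exact .of_forall fun x ↦ by positivity

lemma integral_exp_neg_le_of_quadratic_le {U : V → ℝ} (hU : Continuous U) {m : ℝ} (hm : 0 < m)
    (hUm : ∀ x, m * ‖x‖ ^ 2 / 2 ≤ U x) :
    Integrable (fun x ↦ exp (-U x)) ∧
      ∫ x, exp (-U x) ≤ (2 * π / m) ^ ((Module.finrank ℝ V : ℝ) / 2) := by
  have hle : ∀ x, exp (-U x) ≤ exp (-(m / 2) * ‖x‖ ^ 2) := fun x ↦ by
    rw [exp_le_exp]; linarith [hUm x]
  have hint : Integrable fun x ↦ exp (-U x) :=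
    (integrable_exp_neg_mul_sq_norm (b := m / 2) (by positivity)).mono
      (continuous_exp.comp hU.neg).aestronglyMeasurable
      (.of_forall fun x ↦ by simpa only [norm_of_nonneg (exp_pos _).le] using hle x)
  refine ⟨hint, ?_⟩
  calc ∫ x, exp (-U x) ≤ ∫ x : V, exp (-(m / 2) * ‖x‖ ^ 2) :=
        integral_mono hint (integrable_exp_neg_mul_sq_norm (by positivity)) hle
    _ = _ := by
      rw [GaussianFourier.integral_rexp_neg_mul_sq_norm (by positivity), div_div_eq_mul_div,
        mul_comm π]

end Gaussian

section Taylor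

lemma half_mul_le_of_le_deriv2 {g g' g'' : ℝ → ℝ} {a : ℝ} (hg : ∀ t, HasDerivAt g (g' t) t)
    (hg' : ∀ t, HasDerivAt g' (g'' t) t) (h0 : g 0 = 0) (h0' : g' 0 = 0) (ha : ∀ t, a ≤ g'' t) :
    a / 2 ≤ g 1 := by
  have hmono' : Monotone fun t ↦ g' t - a * t :=
    monotone_of_hasDerivAt_nonneg (f' := fun t ↦ g'' t - a)
      (fun t ↦ ((hg' t).sub ((hasDerivAt_id' t).const_mul a)).congr_deriv (by ring))
      (fun t ↦ sub_nonneg.2 (ha t))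
  have hderiv : ∀ t, HasDerivAt (fun t ↦ g t - a * t ^ 2 / 2) (g' t - a * t) t := fun t ↦
    ((hg t).sub (((hasDerivAt_pow 2 t).const_mul a).div_const 2)).congr_deriv (by ring)
  have hmono : MonotoneOn (fun t ↦ g t - a * t ^ 2 / 2) (Set.Ici 0) :=
    monotoneOn_of_hasDerivWithinAt_nonneg (convex_Ici 0)
      (fun t _ ↦ (hderiv t).continuousAt.continuousWithinAt)
      (fun t _ ↦ (hderiv t).hasDerivWithinAt)
      (fun t ht ↦ by
        rw [interior_Ici] at ht
        simpa [h0'] using hmono' (le_of_lt ht))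
  have := hmono Set.self_mem_Ici (Set.mem_Ici.2 zero_le_one) zero_le_one
  simp only [h0] at this
  linarith

lemma le_half_mul_of_deriv2_le {g g' g'' : ℝ → ℝ} {b : ℝ} (hg : ∀ t, HasDerivAt g (g' t) t)
    (hg' : ∀ t, HasDerivAt g' (g'' t) t) (h0 : g 0 = 0) (h0' : g' 0 = 0) (hb : ∀ t, g'' t ≤ b) :
    g 1 ≤ b / 2 := by
  have := half_mul_le_of_le_deriv2 (fun t ↦ (hg t).neg) (fun t ↦ (hg' t).neg)
    (by simp [h0]) (by simp [h0']) (fun t ↦ neg_le_neg (hb t))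
  rw [Pi.neg_apply] at this
  linarith

variable {E F : Type*} [NormedAddCommGroup E] [NormedSpace ℝ E] [NormedAddCommGroup F]
  [NormedSpace ℝ F]

lemma hasDerivAt_comp_smul {f : E → F} (hf : Differentiable ℝ f) (x : E) (t : ℝ) :
    HasDerivAt (fun s : ℝ ↦ f (s • x)) (fderiv ℝ f (t • x) x) t :=
  (hf (t • x)).hasFDerivAt.comp_hasDerivAt t (by simpa using (hasDerivAt_id t).smul_const x)

variable {U : E → ℝ}

lemma hasDerivAt_fderiv_comp_smul_apply (hU : ContDiff ℝ 2 U) (x : E) (t : ℝ) :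
    HasDerivAt (fun s : ℝ ↦ fderiv ℝ U (s • x) x) (iteratedFDeriv ℝ 2 U (t • x) ![x, x]) t := by
  have hDU : Differentiable ℝ (fderiv ℝ U) :=
    (hU.fderiv_right (m := 1) le_rfl).differentiable one_ne_zero
  rw [iteratedFDeriv_two_apply]
  simpa using (hasDerivAt_comp_smul hDU x t).clm_apply (hasDerivAt_const t x)

lemma quadratic_bounds_of_hessian_bounds (hU : ContDiff ℝ 2 U) {a b : ℝ}
    (hHess : ∀ x v : E, a * ‖v‖ ^ 2 ≤ iteratedFDeriv ℝ 2 U x ![v, v] ∧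
      iteratedFDeriv ℝ 2 U x ![v, v] ≤ b * ‖v‖ ^ 2)
    (hU0 : U 0 = 0) (hDU0 : fderiv ℝ U 0 = 0) (x : E) :
    a * ‖x‖ ^ 2 / 2 ≤ U x ∧ U x ≤ b * ‖x‖ ^ 2 / 2 := by
  have hg := hasDerivAt_comp_smul (hU.differentiable two_ne_zero) x
  have hg' := hasDerivAt_fderiv_comp_smul_apply hU x
  have h0 : U ((0 : ℝ) • x) = 0 := by simp [hU0]
  have h0' : fderiv ℝ U ((0 : ℝ) • x) x = 0 := by simp [hDU0]
  constructor
  · simpa using half_mul_le_of_le_deriv2 hg hg' h0 h0' fun t ↦ (hHess (t • x) x).1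
  · simpa using le_half_mul_of_deriv2_le hg hg' h0 h0' fun t ↦ (hHess (t • x) x).2

end Taylor

section Measure

variable {α : Type*} [MeasurableSpace α]

lemma rnDeriv_withDensity_ofReal_ae_eq (ν : Measure α) [SigmaFinite ν] {p q : α → ℝ}
    (hp : Measurable p) (hq : Measurable q) (hq_pos : ∀ x, 0 < q x) :
    (ν.withDensity fun x ↦ ENNReal.ofReal (p x)).rnDeriv
        (ν.withDensity fun x ↦ ENNReal.ofReal (q x))
      =ᵐ[ν.withDensity fun x ↦ ENNReal.ofReal (p x)] fun x ↦ ENNReal.ofReal (p x / q x) := by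
  have hpq : ν.withDensity (fun x ↦ ENNReal.ofReal (p x)) =
      (ν.withDensity fun x ↦ ENNReal.ofReal (q x)).withDensity
        fun x ↦ ENNReal.ofReal (p x / q x) := by
    rw [← withDensity_mul _ (by fun_prop) (by fun_prop)]
    congr 1
    ext x
    rw [Pi.mul_apply, ← ENNReal.ofReal_mul (hq_pos x).le, mul_div_cancel₀ _ (hq_pos x).ne']
  rw [hpq]
  exact (withDensity_absolutelyContinuous _ _).ae_le
    (Measure.rnDeriv_withDensity _ (hp.div hq).ennreal_ofReal)

lemma integral_le_of_ae_le_of_nonneg {μ : Measure α} [IsProbabilityMeasure μ] {f : α → ℝ}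
    {C : ℝ} (hC : 0 ≤ C) (hf : ∀ᵐ x ∂μ, f x ≤ C) : ∫ x, f x ∂μ ≤ C := by
  by_cases hint : Integrable f μ
  · simpa using integral_mono_ae hint (integrable_const C) hf
  · rw [integral_undef hint]; exact hC

end Measure

theorem kl_gaussian_start_general (d : ℕ) (m L : ℝ)
    (hm : 0 < m) (hm1 : m ≤ 1) (hL : 1 ≤ L)
    (U : EuclideanSpace ℝ (Fin d) → ℝ)
    (hU : ContDiff ℝ 2 U)
    (hHess : ∀ x v : EuclideanSpace ℝ (Fin d),
      m * ‖v‖ ^ 2 ≤ iteratedFDeriv ℝ 2 U x ![v, v] ∧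
      iteratedFDeriv ℝ 2 U x ![v, v] ≤ L * ‖v‖ ^ 2)
    (hU0 : U 0 = 0) (hUmin : ∀ x ≠ 0, 0 < U x)
    (μ μ₀ : Measure (EuclideanSpace ℝ (Fin d)))
    (hμ : μ = volume.withDensity (fun x =>
      ENNReal.ofReal ((∫ y, Real.exp (-U y))⁻¹ * Real.exp (-U x))))
    (hμ₀ : μ₀ = volume.withDensity (fun x =>
      ENNReal.ofReal ((L / (2 * π)) ^ ((d : ℝ) / 2) * Real.exp (-L * ‖x‖ ^ 2 / 2)))) :
    (∫ x, Real.log ((μ₀.rnDeriv μ x).toReal) ∂μ₀) ≤ (d / 2 : ℝ) * Real.log (L / m) := by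
  have hL0 : 0 < L := by linarith
  have hDU0 : fderiv ℝ U 0 = 0 := IsLocalMin.fderiv_eq_zero <| .of_forall fun x ↦ by
    rcases eq_or_ne x 0 with rfl | hx
    · rfl
    · exact hU0 ▸ (hUmin x hx).le
  have hquad := quadratic_bounds_of_hessian_bounds hU hHess hU0 hDU0
  obtain ⟨hint, hZ_le⟩ :=
    integral_exp_neg_le_of_quadratic_le hU.continuous hm fun x ↦ (hquad x).1
  rw [finrank_euclideanSpace_fin] at hZ_le
  set Z := ∫ y, exp (-U y)
  set c := (L / (2 * π)) ^ ((d : ℝ) / 2)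
  have hZ : 0 < Z := integral_exp_pos hint
  have : IsProbabilityMeasure μ₀ := by
    simpa [hμ₀] using
      isProbabilityMeasure_withDensity_gaussian (V := EuclideanSpace ℝ (Fin d)) hL0
  have hrn := rnDeriv_withDensity_ofReal_ae_eq volume (p := fun x ↦ c * exp (-L * ‖x‖ ^ 2 / 2))
    (q := fun x ↦ Z⁻¹ * exp (-U x)) (by fun_prop) (by have := hU.continuous; fun_prop)
    fun x ↦ by positivity
  rw [← hμ, ← hμ₀] at hrn
  have hlog_cZ : log c + log Z ≤ d / 2 * log (L / m) :=
    calc log c + log Z = log (c * Z) := (log_mul (by positivity) hZ.ne').symm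
      _ ≤ log (c * (2 * π / m) ^ ((d : ℝ) / 2)) := log_le_log (by positivity) (by gcongr)
      _ = d / 2 * log (L / m) := by
        rw [← mul_rpow (by positivity) (by positivity),
          show L / (2 * π) * (2 * π / m) = L / m by field_simp, log_rpow (by positivity)]
  refine integral_le_of_ae_le_of_nonneg
    (mul_nonneg (by positivity) (log_nonneg ((one_le_div hm).2 (by linarith)))) ?_
  filter_upwards [hrn] with x hx
  rw [hx, ENNReal.toReal_ofReal (by positivity), log_div (by positivity) (by positivity),
    log_mul (by positivity) (by positivity), log_mul (by positivity) (by positivity),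
    log_exp, log_exp, log_inv]
  linarith [(hquad x).2, hlog_cZ]

/-- under Assumption 1, for the target `μ = Z⁻¹ e^{−U} dx` and the Gaussian
`μ₀ = N(0, L⁻¹·Id)`, the Kullback–Leibler divergence satisfies
`KL(μ₀ ‖ μ) = ∫ log(dμ₀/dμ) dμ₀ ≤ (d/2)·log(L/m)`. -/
theorem kl_gaussian_start (d : ℕ) (hd : 1 ≤ d) (m L : ℝ)
    (hm : 0 < m) (hm1 : m ≤ 1) (hL : 1 ≤ L)
    (U : EuclideanSpace ℝ (Fin d) → ℝ)
    (hU : ContDiff ℝ 2 U)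
    (hHess : ∀ x v : EuclideanSpace ℝ (Fin d),
      m * ‖v‖ ^ 2 ≤ iteratedFDeriv ℝ 2 U x ![v, v] ∧
      iteratedFDeriv ℝ 2 U x ![v, v] ≤ L * ‖v‖ ^ 2)
    (hU0 : U 0 = 0) (hUmin : ∀ x ≠ 0, 0 < U x)
    (μ μ₀ : Measure (EuclideanSpace ℝ (Fin d)))
    (hμ : μ = volume.withDensity (fun x =>
      ENNReal.ofReal ((∫ y, Real.exp (-U y))⁻¹ * Real.exp (-U x))))
    (hμ₀ : μ₀ = volume.withDensity (fun x =>
      ENNReal.ofReal ((L / (2 * π)) ^ ((d : ℝ) / 2) * Real.exp (-L * ‖x‖ ^ 2 / 2)))) :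
    (∫ x, Real.log ((μ₀.rnDeriv μ x).toReal) ∂μ₀) ≤ (d / 2 : ℝ) * Real.log (L / m) :=
  kl_gaussian_start_general d m L hm hm1 hL U hU hHess hU0 hUmin μ μ₀ hμ hμ₀
end

section
/- There exists a universal constant C with the following property. Let d ≥ 1, 0 < m ≤ 1 ≤ L, κ = L/m, T > 0 with κ ≤ √L·T, and let U : ℝ^d → ℝ be twice continuously differentiable with m‖w‖² ≤ ⟨w, ∇²U(x)w⟩ ≤ L‖w‖² for all x, w ∈ ℝ^d, with unique minimizer at 0 and U(0) = 0. Let N ≥ 1, let 0 = T_0 < T_1 < ⋯ < T_N ≤ T be given times, and let X : [0,T] → ℝ^d be Lipschitz and piecewise linear with piecewise constant velocity V(t) = X'(t) such that: (i) for every k = 0,…,N and every t in [T_k, T_{k+1}) ∩ [0,T] (with T_{N+1} := T), each component of V(t) equals ±(V_k)_i where V_k := V(T_k); (ii) at every discontinuity time s of V inside such an interval, lim_{t↓s} V(t)·∇U(X(s)) ≤ lim_{t↑s} V(t)·∇U(X(s)). Assume moreover: (a) (1/2)√L·T ≤ N ≤ (3/2)√L·T; (b) |V_k·∇U(X(T_k))|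 ≤ (d/(√L·T))^{1/2}·‖∇U(X(T_k))‖ for every k = 0,…,N; (c) ‖V_k‖ ≤ 2√d for every k = 0,…,N; (d) U(X(0)) ≤ κ·d; (e) Σ_{k=1}^{N+1} (T_k − T_{k−1})² ≤ 4T/√L, where T_{N+1} := T. Then sup_{t∈[0,T]} U(X(t)) ≤ C·√L·T·d. -/
/-!
While `V` is constant, `λ(t) = ⟪V t, ∇U (X t)⟫` grows at rate at most `L ‖V‖² ≤ 4 L d`, and at the
sign flips between two refresh times it does not increase, so on `[T_k, T_{k+1}]`
`U (X t) ≤ U (X T_k) + λ(T_k) (t - T_k) + 2 L d (t - T_k)²`. Condition (b), the bound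
`‖∇U‖² ≤ 2 L U` and AM-GM give `λ(T_k) T ≤ √L T d + U (X T_k) / 2`. Summing the interval bounds and
using (d) and (e), `U ∘ X ≤ 10 √L T d + M / 2` on `[0, T]`, where `M` is the largest value of `U ∘ X`
at a refresh time; evaluated at that time this gives `M ≤ 20 √L T d`, hence the claim with `C = 20`.

The sign flips may accumulate from the left at a point where `λ` has no left limit, so the jump
condition cannot be applied there directly. Since `V` takes finitely many values between refresh
times, an induction on the set of values taken just before the point still shows that `λ` there is
at most its upper limit from the left.
-/

open Set Filter Topology
open scoped RealInnerProductSpace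

lemma le_add_mul_sub_of_hasDerivWithinAt_le {f f' : ℝ → ℝ} {a b K : ℝ}
    (hf : ContinuousOn f (Icc a b)) (hf' : ∀ x ∈ Ico a b, HasDerivWithinAt f (f' x) (Ici x) x)
    (hK : ∀ x ∈ Ico a b, f' x ≤ K) : ∀ t ∈ Icc a b, f t ≤ f a + K * (t - a) := by
  have hB : ∀ x, HasDerivAt (fun t => f a + K * (t - a)) K x := fun x => by
    simpa using ((hasDerivAt_id x).sub_const a).const_mul K |>.const_add (f a)
  exact fun t ht => image_le_of_deriv_right_le_deriv_boundary hf hf' (by simp)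
    (fun x _ => (hB x).continuousAt.continuousWithinAt) (fun x _ => (hB x).hasDerivWithinAt) hK ht

lemma le_add_mul_add_sq_of_hasDerivWithinAt {g g' : ℝ → ℝ} {a b K : ℝ}
    (hg : ContinuousOn g (Icc a b)) (hg' : ∀ x ∈ Ico a b, HasDerivWithinAt g (g' x) (Ici x) x)
    (hK : ∀ x ∈ Ico a b, g' x ≤ g' a + K * (x - a)) :
    ∀ t ∈ Icc a b, g t ≤ g a + g' a * (t - a) + K / 2 * (t - a) ^ 2 := by
  have hB : ∀ x, HasDerivAt (fun t => g a + g' a * (t - a) + K / 2 * (t - a) ^ 2)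
      (g' a + K * (x - a)) x := fun x => by
    have h : HasDerivAt (fun t : ℝ => t - a) 1 x := (hasDerivAt_id' x).sub_const a
    exact (((h.const_mul (g' a)).const_add (g a)).fun_add
      ((h.fun_pow 2).const_mul (K / 2))).congr_deriv (by push_cast; ring)
  exact fun t ht => image_le_of_deriv_right_le_deriv_boundary hg hg' (by simp)
    (fun x _ => (hB x).continuousAt.continuousWithinAt) (fun x _ => (hB x).hasDerivWithinAt) hK ht

lemma exists_first_mem_Ioc {Q : ℝ → Prop} {a t : ℝ} (hat : a ≤ t) (ha : ¬Q a) (ht : Q t)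
    (hQ : ∀ s ∈ Ico a t, ¬Q s → ∀ᶠ u in 𝓝[≥] s, ¬Q u) :
    ∃ c ∈ Ioc a t, Q c ∧ ∀ u ∈ Ico a c, ¬Q u := by
  set S := {u ∈ Icc a t | Q u}
  have hS : BddBelow S := ⟨a, fun u hu => hu.1.1⟩
  have hSne : S.Nonempty := ⟨t, ⟨hat, le_rfl⟩, ht⟩
  have hct : sInf S ≤ t := csInf_le hS ⟨⟨hat, le_rfl⟩, ht⟩
  have hac : a ≤ sInf S := le_csInf hSne fun u hu => hu.1.1
  have hbefore : ∀ u ∈ Ico a (sInf S), ¬Q u := fun u hu hQu =>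
    (csInf_le hS ⟨⟨hu.1, hu.2.le.trans hct⟩, hQu⟩).not_gt hu.2
  have hQc : Q (sInf S) := by
    by_contra hc
    have hlt : sInf S < t := hct.lt_of_ne fun h => hc (h ▸ ht)
    obtain ⟨ε, hε, hsub⟩ := mem_nhdsGE_iff_exists_Ico_subset.1 (hQ _ ⟨hac, hlt⟩ hc)
    obtain ⟨v, hv, hvε⟩ := (csInf_lt_iff hS hSne).1 (show sInf S < ε from hε)
    exact hsub ⟨csInf_le hS hv, hvε⟩ hv.2
  exact ⟨sInf S, ⟨hac.lt_of_ne fun h => ha (h ▸ hQc), hct⟩, hQc, hbefore⟩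

lemma le_add_mul_sub_of_eventually_le {f : ℝ → ℝ} {a b K : ℝ} (hK : 0 ≤ K)
    (hright : ∀ s ∈ Ico a b, ∀ᶠ u in 𝓝[≥] s, f u ≤ f s + K * (u - s))
    (hleft : ∀ s ∈ Ioo a b, ∀ γ > 0, ∃ᶠ u in 𝓝[<] s, f s < f u + γ) :
    ∀ t ∈ Ico a b, f t ≤ f a + K * (t - a) := by
  intro t ht
  by_contra! hbad
  obtain ⟨c, hc, hQc, hbefore⟩ := exists_first_mem_Ioc (Q := fun u => f a + K * (u - a) < f u)
    ht.1 (by simp) hbad fun s hs hQs => (hright s ⟨hs.1, hs.2.trans ht.2⟩).mono fun u hu => by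
      linarith
  obtain ⟨u, hlt, hu⟩ := ((hleft c ⟨hc.1, hc.2.trans_lt ht.2⟩ _ (sub_pos.2 hQc)).and_eventually
    (Ioo_mem_nhdsLT hc.1)).exists
  have := not_lt.1 (hbefore u ⟨hu.1.le, hu.2⟩)
  nlinarith [hu.2]

lemma le_add_of_forall_le_on_partition {g : ℝ → ℝ} {Ts : ℕ → ℝ} {α β : ℝ} (hα : 0 ≤ α)
    (hβ : 0 ≤ β) {n : ℕ} (hTs : MonotoneOn Ts (Iic n))
    (hg : ∀ k < n, ∀ t ∈ Icc (Ts k) (Ts (k + 1)),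
      g t ≤ g (Ts k) + α * (t - Ts k) + β * (t - Ts k) ^ 2) :
    ∀ t ∈ Icc (Ts 0) (Ts n), g t ≤ g (Ts 0) + α * (Ts n - Ts 0)
      + β * ∑ k ∈ Finset.range n, (Ts (k + 1) - Ts k) ^ 2 := by
  induction n with
  | zero => intro t ht; simp [le_antisymm ht.2 ht.1]
  | succ n ih =>
    have hmono : MonotoneOn Ts (Iic n) := hTs.mono (Iic_subset_Iic.2 n.le_succ)
    have hstep : Ts n ≤ Ts (n + 1) := hTs (by simp) (by simp) n.le_succ
    have ih := ih hmono fun k hk => hg k (hk.trans n.lt_succ_self)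
    rw [Finset.sum_range_succ]
    intro t ht
    rcases le_total t (Ts n) with htn | htn
    · have := ih t ⟨ht.1, htn⟩
      nlinarith [sq_nonneg (Ts (n + 1) - Ts n)]
    · have h0n : Ts 0 ≤ Ts n := hmono (by simp) (by simp) n.zero_le
      have h1 := hg n n.lt_succ_self t ⟨htn, ht.2⟩
      have h2 := ih (Ts n) ⟨h0n, le_rfl⟩
      have h3 : (t - Ts n) ^ 2 ≤ (Ts (n + 1) - Ts n) ^ 2 :=
        pow_le_pow_left₀ (sub_nonneg.2 htn) (by linarith [ht.2]) 2
      nlinarith [mul_le_mul_of_nonneg_left h3 hβ, mul_le_mul_of_nonneg_left ht.2 hα]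

lemma le_of_forall_le_on_partition_of_slope_le {g : ℝ → ℝ} {Ts σ : ℕ → ℝ} {n : ℕ} {A β T : ℝ}
    (hT : 0 < T) (hA : 0 ≤ A) (hβ : 0 ≤ β) (hTs : MonotoneOn Ts (Iic n)) (hTs0 : Ts 0 = 0)
    (hTsn : Ts n = T) (hg0 : 0 ≤ g 0)
    (hg : ∀ k < n, ∀ t ∈ Icc (Ts k) (Ts (k + 1)),
      g t ≤ g (Ts k) + σ k * (t - Ts k) + β * (t - Ts k) ^ 2)
    (hσ : ∀ k < n, σ k * T ≤ A + g (Ts k) / 2) :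
    ∀ t ∈ Icc 0 T, g t ≤ 2 * (g 0 + A + β * ∑ k ∈ Finset.range n, (Ts (k + 1) - Ts k) ^ 2) := by
  obtain ⟨j, hj, hmax⟩ := (Finset.range (n + 1)).exists_max_image (fun k => g (Ts k)) ⟨0, by simp⟩
  have hj : j ∈ Iic n := Nat.lt_succ_iff.1 (Finset.mem_range.1 hj)
  have hM : 0 ≤ g (Ts j) := hg0.trans (hTs0 ▸ hmax 0 (by simp))
  have hglobal := le_add_of_forall_le_on_partition (α := (A + g (Ts j) / 2) / T)
    (by positivity) hβ hTs fun k hk t ht => (hg k hk t ht).trans <| by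
      have hσk : σ k ≤ (A + g (Ts j) / 2) / T := by
        rw [le_div_iff₀ hT]
        linarith [hσ k hk, hmax k (Finset.mem_range.2 (hk.trans n.lt_succ_self))]
      nlinarith [mul_le_mul_of_nonneg_right hσk (sub_nonneg.2 ht.1)]
  rw [hTs0, hTsn, sub_zero, div_mul_cancel₀ _ hT.ne'] at hglobal
  have hTsj := hglobal (Ts j) ⟨hTs0 ▸ hTs (by simp) hj (Nat.zero_le j), hTsn ▸ hTs hj (by simp) hj⟩
  intro t ht
  linarith [hglobal t ht]

section LeftLimits

variable {E : Type*} [NormedAddCommGroup E] [InnerProductSpace ℝ E]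

lemma eventually_forall_abs_inner_sub_lt {F : ℝ → E} {s γ : ℝ} (hF : ContinuousAt F s)
    (hγ : 0 < γ) (S : Finset E) : ∀ᶠ u in 𝓝 s, ∀ w ∈ S, |⟪w, F u⟫ - ⟪w, F s⟫| < γ :=
  S.eventually_all.2 fun w _ => by
    simpa only [Real.dist_eq] using
      Metric.tendsto_nhds.1 ((tendsto_const_nhds (x := w)).inner (𝕜 := ℝ) hF) γ hγ

lemma exists_first_mem_Ioo_of_frequently {α : Type*} {V : ℝ → α} {P : α → Prop} {u₁ s : ℝ}
    (hu₁ : u₁ < s) (hV : ∀ r ∈ Ico u₁ s, ∀ᶠ u in 𝓝[≥] r, V u = V r) (h₁ : ¬P (V u₁))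
    (hfreq : ∃ᶠ u in 𝓝[<] s, P (V u)) :
    ∃ c ∈ Ioo u₁ s, P (V c) ∧ ∀ u ∈ Ico u₁ c, ¬P (V u) := by
  obtain ⟨u₂, hPu₂, hu₂⟩ := (hfreq.and_eventually (Ioo_mem_nhdsLT hu₁)).exists
  obtain ⟨c, hc, hPc, hbefore⟩ := exists_first_mem_Ioc (Q := fun u => P (V u)) hu₂.1.le h₁ hPu₂
    fun r hr hPr => (hV r ⟨hr.1, hr.2.trans hu₂.2⟩).mono fun u hu => by rwa [hu]
  exact ⟨c, ⟨hc.1, hc.2.trans_lt hu₂.2⟩, hPc, hbefore⟩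

variable {V F : ℝ → E} {s γ : ℝ}

lemma frequently_lt_inner_add_of_tendsto (hF : ContinuousAt F s)
    (hV : ∀ᶠ u in 𝓝[≥] s, V u = V s)
    (hjump : ∀ p q : ℝ, Tendsto (fun u => ⟪V u, F s⟫) (𝓝[>] s) (𝓝 p) →
      Tendsto (fun u => ⟪V u, F s⟫) (𝓝[<] s) (𝓝 q) → p ≤ q)
    {S : Finset E} (hS : ∀ᶠ u in 𝓝[<] s, V u ∈ S) {θ : ℝ}
    (hθ : Tendsto (fun u => ⟪V u, F s⟫) (𝓝[<] s) (𝓝 θ)) (hγ : 0 < γ) :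
    ∃ᶠ u in 𝓝[<] s, ⟪V s, F s⟫ < ⟪V u, F u⟫ + γ := by
  have hright : Tendsto (fun u => ⟪V u, F s⟫) (𝓝[>] s) (𝓝 ⟪V s, F s⟫) :=
    tendsto_const_nhds.congr' <| (hV.filter_mono (nhdsWithin_mono _ Ioi_subset_Ici_self)).mono
      fun u hu => by simp only [hu]
  have hle := hjump _ _ hright hθ
  have hclose := (eventually_forall_abs_inner_sub_lt hF (half_pos hγ) S).filter_mono
    (nhdsWithin_le_nhds (s := Iio s))
  refine Eventually.frequently ?_
  filter_upwards [hθ.eventually (lt_mem_nhds (by linarith : θ - γ / 2 < θ)), hS, hclose]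
    with u hθu hu hFu
  linarith [(abs_lt.1 (hFu _ hu)).1]

variable {a b : ℝ}

theorem frequently_lt_inner_add_of_eventually_mem (hF : Continuous F)
    (hV : ∀ s ∈ Ioo a b, ∀ᶠ u in 𝓝[≥] s, V u = V s)
    (hjump : ∀ s ∈ Ioo a b, ∀ p q : ℝ, Tendsto (fun u => ⟪V u, F s⟫) (𝓝[>] s) (𝓝 p) →
      Tendsto (fun u => ⟪V u, F s⟫) (𝓝[<] s) (𝓝 q) → p ≤ q)
    (S : Finset E) (hs : s ∈ Ioo a b) (hS : ∀ᶠ u in 𝓝[<] s, V u ∈ S) (hγ : 0 < γ) :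
    ∃ᶠ u in 𝓝[<] s, ⟪V s, F s⟫ < ⟪V u, F u⟫ + γ := by
  classical
  induction S using Finset.strongInduction generalizing s γ with | H S ih => ?_
  by_cases hrare : ∃ p ∈ S, ∀ᶠ u in 𝓝[<] s, V u ≠ p
  · obtain ⟨p, hp, hne⟩ := hrare
    exact ih _ (Finset.erase_ssubset hp) hs
      ((hS.and hne).mono fun u hu => Finset.mem_erase.2 ⟨hu.2, hu.1⟩) hγ
  push Not at hrare
  by_cases hconst : ∀ p ∈ S, ∀ q ∈ S, ⟪p, F s⟫ ≤ ⟪q, F s⟫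
  · obtain ⟨u₀, hu₀⟩ := (hS.exists : ∃ u, V u ∈ S)
    refine frequently_lt_inner_add_of_tendsto hF.continuousAt (hV s hs) (hjump s hs) hS
      (θ := ⟪V u₀, F s⟫) (tendsto_const_nhds.congr' (hS.mono fun u hu => ?_)) hγ
    exact le_antisymm (hconst _ hu₀ _ hu) (hconst _ hu _ hu₀)
  -- Otherwise `V` oscillates near `s` between a low and a high value of `⟪·, F s⟫`; the first
  -- time after a low value at which a high value is taken contradicts the induction hypothesis.
  exfalso
  push Not at hconst
  obtain ⟨q, hq, p, hp, hpq⟩ := hconst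
  set Slow := S.filter fun w => ⟪w, F s⟫ < ⟪q, F s⟫
  obtain ⟨w₀, hw₀, hmax⟩ := Slow.exists_max_image (fun w => ⟪w, F s⟫)
    ⟨p, Finset.mem_filter.2 ⟨hp, hpq⟩⟩
  set g := ⟪q, F s⟫ - ⟪w₀, F s⟫
  have hg : 0 < g := sub_pos.2 (Finset.mem_filter.1 hw₀).2
  obtain ⟨l, hl, hwin⟩ := mem_nhdsLT_iff_exists_Ioo_subset.1 <|
    Filter.Eventually.and (Ioo_mem_nhdsLT hs.1) <| hS.and <|
      (eventually_forall_abs_inner_sub_lt hF.continuousAt (by positivity : 0 < g / 4)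
        S).filter_mono nhdsWithin_le_nhds
  obtain ⟨u₁, hpu₁, hu₁⟩ :=
    ((hrare p hp).and_eventually (Ioo_mem_nhdsLT (mem_Iio.1 hl))).exists
  obtain ⟨c, hc, hqc, hbefore⟩ := exists_first_mem_Ioo_of_frequently
    (P := fun w => ⟪q, F s⟫ ≤ ⟪w, F s⟫) hu₁.2
    (fun r hr => hV r ⟨(hwin ⟨hu₁.1.trans_le hr.1, hr.2⟩).1.1, hr.2.trans hs.2⟩)
    (by simpa [hpu₁] using hpq) ((hrare q hq).mono fun u hu => by simp [hu])
  have hwin' : ∀ u ∈ Icc u₁ c, u ∈ Ioo a s ∧ V u ∈ S ∧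
      ∀ w ∈ S, |⟪w, F u⟫ - ⟪w, F s⟫| < g / 4 :=
    fun u hu => hwin ⟨hu₁.1.trans_le hu.1, hu.2.trans_lt hc.2⟩
  have hc' := hwin' c ⟨hc.1.le, le_rfl⟩
  have hlow : ∀ᶠ u in 𝓝[<] c, u ∈ Ioo u₁ c ∧ V u ∈ Slow :=
    (eventually_mem_set.2 (Ioo_mem_nhdsLT hc.1)).mono fun u hu => ⟨hu, Finset.mem_filter.2
      ⟨(hwin' u ⟨hu.1.le, hu.2.le⟩).2.1, not_le.1 (hbefore u ⟨hu.1.le, hu.2⟩)⟩⟩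
  obtain ⟨u₃, hlt, hu₃, hu₃low⟩ := ((ih Slow (Finset.filter_ssubset.2 ⟨q, hq, lt_irrefl _⟩)
    ⟨hc'.1.1, hc.2.trans hs.2⟩ (hlow.mono fun _ h => h.2)
    (by positivity : 0 < g / 4)).and_eventually hlow).exists
  have hu₃' := hwin' u₃ ⟨hu₃.1.le, hu₃.2.le⟩
  linarith [(abs_lt.1 (hc'.2.2 _ hc'.2.1)).1, (abs_lt.1 (hu₃'.2.2 _ hu₃'.2.1)).2, hmax _ hu₃low]

end LeftLimits

section Smooth

variable {E : Type*} [NormedAddCommGroup E] [InnerProductSpace ℝ E] {U : E → ℝ} {L : ℝ}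

lemma hasDerivWithinAt_fderiv_apply (hU : ContDiff ℝ 2 U) {X : ℝ → E} {v : E} {s : Set ℝ}
    {r : ℝ} (hX : HasDerivWithinAt X v s r) (w : E) :
    HasDerivWithinAt (fun u => fderiv ℝ U (X u) w) (fderiv ℝ (fderiv ℝ U) (X r) v w) s r := by
  have hDU : HasFDerivAt (fderiv ℝ U) (fderiv ℝ (fderiv ℝ U) (X r)) (X r) :=
    ((hU.fderiv_right (m := 1) le_rfl).differentiable one_ne_zero _).hasFDerivAt
  simpa using (hDU.comp_hasDerivWithinAt r hX).clm_apply (hasDerivWithinAt_const r s w)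

lemma le_add_fderiv_add_sq (hU : ContDiff ℝ 2 U)
    (hL : ∀ x w, fderiv ℝ (fderiv ℝ U) x w w ≤ L * ‖w‖ ^ 2) (x h : E) :
    U (x + h) ≤ U x + fderiv ℝ U x h + L * ‖h‖ ^ 2 / 2 := by
  have hc : ∀ t : ℝ, HasDerivAt (fun t : ℝ => x + t • h) h t := fun t => by
    simpa using ((hasDerivAt_id t).smul_const h).const_add x
  have hDU : ∀ t : ℝ, HasDerivAt (fun t => fderiv ℝ U (x + t • h) h)
      (fderiv ℝ (fderiv ℝ U) (x + t • h) h h) t := fun t =>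
    (hasDerivWithinAt_fderiv_apply hU (hc t).hasDerivWithinAt h).hasDerivAt univ_mem
  have hslope := le_add_mul_sub_of_hasDerivWithinAt_le (a := 0) (b := 1)
    (fun t _ => (hDU t).continuousAt.continuousWithinAt) (fun t _ => (hDU t).hasDerivWithinAt)
    (fun t _ => hL _ h)
  have hU' : ∀ t : ℝ, HasDerivAt (fun t => U (x + t • h)) (fderiv ℝ U (x + t • h) h) t :=
    fun t => ((hU.differentiable (by norm_num) _).hasFDerivAt).comp_hasDerivAt t (hc t)
  simpa using le_add_mul_add_sq_of_hasDerivWithinAt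
    (fun t _ => (hU' t).continuousAt.continuousWithinAt) (fun t _ => (hU' t).hasDerivWithinAt)
    (fun t ht => by simpa using hslope t (Ico_subset_Icc_self ht)) 1 ⟨zero_le_one, le_rfl⟩

variable [CompleteSpace E]

lemma norm_gradient_sq_le (hU : ContDiff ℝ 2 U)
    (hL : ∀ x w, fderiv ℝ (fderiv ℝ U) x w w ≤ L * ‖w‖ ^ 2) (hL0 : 0 < L) (hU0 : ∀ y, 0 ≤ U y)
    (x : E) : ‖gradient U x‖ ^ 2 ≤ 2 * L * U x := by
  have h := le_add_fderiv_add_sq hU hL x (-L⁻¹ • gradient U x)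
  rw [← inner_gradient_left, inner_smul_right, real_inner_self_eq_norm_sq, norm_smul,
    norm_neg, Real.norm_of_nonneg (inv_nonneg.2 hL0.le)] at h
  have := (hU0 _).trans h
  field_simp at this
  nlinarith

lemma inner_gradient_mul_le {x v : E} {β τ : ℝ} (hU : ContDiff ℝ 2 U)
    (hL : ∀ x w, fderiv ℝ (fderiv ℝ U) x w w ≤ L * ‖w‖ ^ 2) (hL0 : 0 < L) (hU0 : ∀ y, 0 ≤ U y)
    (hv : |⟪v, gradient U x⟫| ≤ β * ‖gradient U x‖) (hτ : 0 ≤ τ) :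
    ⟪v, gradient U x⟫ * τ ≤ L * (β * τ) ^ 2 + U x / 2 := by
  have hgrad := norm_gradient_sq_le hU hL hL0 hU0 x
  have hamgm : β * τ * ‖gradient U x‖ ≤ L * (β * τ) ^ 2 + ‖gradient U x‖ ^ 2 / (4 * L) := by
    have : L * (β * τ) ^ 2 + ‖gradient U x‖ ^ 2 / (4 * L) - β * τ * ‖gradient U x‖
        = (2 * L * (β * τ) - ‖gradient U x‖) ^ 2 / (4 * L) := by field_simp; ring
    nlinarith [show 0 ≤ (2 * L * (β * τ) - ‖gradient U x‖) ^ 2 / (4 * L) by positivity]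
  have hgrad' : ‖gradient U x‖ ^ 2 / (4 * L) ≤ U x / 2 := by
    rw [div_le_iff₀ (by positivity)]; nlinarith
  calc ⟪v, gradient U x⟫ * τ ≤ β * ‖gradient U x‖ * τ := by
        gcongr; exact (le_abs_self _).trans hv
    _ ≤ L * (β * τ) ^ 2 + U x / 2 := by linarith

end Smooth

section Trajectory

variable {E : Type*} [NormedAddCommGroup E] [InnerProductSpace ℝ E] {U : E → ℝ} {L : ℝ}
  {X V : ℝ → E}

lemma eventually_fderiv_apply_le (hU : ContDiff ℝ 2 U)
    (hL : ∀ x w, fderiv ℝ (fderiv ℝ U) x w w ≤ L * ‖w‖ ^ 2) (hXc : Continuous X) {s b : ℝ}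
    (hsb : s < b) (hX : ∀ r ∈ Ico s b, HasDerivWithinAt X (V r) (Ici r) r)
    (hV : ∀ᶠ u in 𝓝[≥] s, V u = V s) :
    ∀ᶠ u in 𝓝[≥] s, fderiv ℝ U (X u) (V u) ≤ fderiv ℝ U (X s) (V s) + L * ‖V s‖ ^ 2 * (u - s) := by
  obtain ⟨ε, hε, hsub⟩ := mem_nhdsGE_iff_exists_Ico_subset.1 (hV.and (Ico_mem_nhdsGE hsb))
  filter_upwards [Ico_mem_nhdsGE hε] with u hu
  have hcont : Continuous fun r => fderiv ℝ U (X r) (V s) :=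
    ((hU.continuous_fderiv (by norm_num)).comp hXc).clm_apply continuous_const
  have hmem : ∀ r ∈ Ico s u, V r = V s ∧ r ∈ Ico s b := fun r hr => hsub ⟨hr.1, hr.2.trans hu.2⟩
  rw [(hsub hu).1]
  refine le_add_mul_sub_of_hasDerivWithinAt_le hcont.continuousOn
    (fun r hr => hasDerivWithinAt_fderiv_apply hU (hX r (hmem r hr).2) _)
    (fun r hr => ?_) u ⟨hu.1, le_rfl⟩
  rw [(hmem r hr).1]
  exact hL _ _

variable [CompleteSpace E]

theorem le_add_inner_gradient_mul_add_sq (hU : ContDiff ℝ 2 U)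
    (hL : ∀ x w, fderiv ℝ (fderiv ℝ U) x w w ≤ L * ‖w‖ ^ 2) (hL0 : 0 ≤ L) (hXc : Continuous X)
    {a b R : ℝ} (hX : ∀ s ∈ Ico a b, HasDerivWithinAt X (V s) (Ici s) s)
    (hV : ∀ s ∈ Ico a b, ∀ᶠ u in 𝓝[≥] s, V u = V s) (hfin : (V '' Ioo a b).Finite)
    (hR : ∀ u ∈ Ico a b, ‖V u‖ ≤ R)
    (hjump : ∀ s ∈ Ioo a b, ∀ p q : ℝ,
      Tendsto (fun u => ⟪V u, gradient U (X s)⟫) (𝓝[>] s) (𝓝 p) →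
      Tendsto (fun u => ⟪V u, gradient U (X s)⟫) (𝓝[<] s) (𝓝 q) → p ≤ q) :
    ∀ t ∈ Icc a b, U (X t) ≤ U (X a) + ⟪V a, gradient U (X a)⟫ * (t - a)
      + L * R ^ 2 / 2 * (t - a) ^ 2 := by
  have hinner : ∀ u, ⟪V u, gradient U (X u)⟫ = fderiv ℝ U (X u) (V u) := fun u => by
    rw [real_inner_comm, inner_gradient_left]
  have hright : ∀ s ∈ Ico a b, ∀ᶠ u in 𝓝[≥] s,
      fderiv ℝ U (X u) (V u) ≤ fderiv ℝ U (X s) (V s) + L * R ^ 2 * (u - s) := fun s hs => by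
    filter_upwards [eventually_fderiv_apply_le hU hL hXc hs.2
      (fun r hr => hX r ⟨hs.1.trans hr.1, hr.2⟩) (hV s hs), self_mem_nhdsWithin] with u hu hsu
    have : ‖V s‖ ^ 2 ≤ R ^ 2 := pow_le_pow_left₀ (norm_nonneg _) (hR s hs) 2
    nlinarith [mul_le_mul_of_nonneg_left this hL0, sub_nonneg.2 (mem_Ici.1 hsu)]
  have hleft : ∀ s ∈ Ioo a b, ∀ γ > 0, ∃ᶠ u in 𝓝[<] s,
      fderiv ℝ U (X s) (V s) < fderiv ℝ U (X u) (V u) + γ := fun s hs γ hγ => by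
    have hF : Continuous fun u => gradient U (X u) :=
      (InnerProductSpace.toDual ℝ E).symm.continuous.comp
        ((hU.continuous_fderiv (by norm_num)).comp hXc)
    simpa only [hinner] using frequently_lt_inner_add_of_eventually_mem hF
      (fun r hr => hV r ⟨hr.1.le, hr.2⟩) hjump hfin.toFinset hs
      ((eventually_mem_set.2 (Ioo_mem_nhdsLT hs.1)).mono fun u hu =>
        hfin.mem_toFinset.2 (mem_image_of_mem V ⟨hu.1, hu.2.trans hs.2⟩)) hγ
  have hderiv : ∀ s ∈ Ico a b, HasDerivWithinAt (fun u => U (X u)) (fderiv ℝ U (X s) (V s))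
      (Ici s) s := fun s hs =>
    ((hU.differentiable (by norm_num) _).hasFDerivAt).comp_hasDerivWithinAt s (hX s hs)
  intro t ht
  have := le_add_mul_add_sq_of_hasDerivWithinAt (g := fun u => U (X u))
    (hU.continuous.comp hXc).continuousOn hderiv
    (le_add_mul_sub_of_eventually_le (by positivity) hright hleft) t ht
  rw [hinner]
  linarith

end Trajectory

section SignFlips

variable {ι : Type*} [Fintype ι]

lemma norm_eq_of_forall_eq_or_eq_neg {v w : EuclideanSpace ℝ ι}
    (h : ∀ i, w i = v i ∨ w i = -v i) : ‖w‖ = ‖v‖ := by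
  simp only [EuclideanSpace.norm_eq]
  congr 1
  refine Finset.sum_congr rfl fun i _ => ?_
  rcases h i with h | h <;> simp [h]

lemma finite_setOf_forall_eq_or_eq_neg (v : EuclideanSpace ℝ ι) :
    {w : EuclideanSpace ℝ ι | ∀ i, w i = v i ∨ w i = -v i}.Finite :=
  (Set.Finite.pi fun i => (toFinite {v i, -v i})).preimage (WithLp.ofLp_injective 2).injOn
    |>.subset fun _ hw i _ => hw i

theorem le_add_inner_gradient_mul_add_sq_of_sign_flips {U : EuclideanSpace ℝ ι → ℝ} {L : ℝ}
    (hU : ContDiff ℝ 2 U) (hL : ∀ x w, fderiv ℝ (fderiv ℝ U) x w w ≤ L * ‖w‖ ^ 2) (hL0 : 0 ≤ L)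
    {X V : ℝ → EuclideanSpace ℝ ι} (hXc : Continuous X) {a b R : ℝ}
    (hX : ∀ s ∈ Ico a b, HasDerivWithinAt X (V s) (Ici s) s)
    (hV : ∀ s ∈ Ico a b, ∀ᶠ u in 𝓝[≥] s, V u = V s)
    (hflip : ∀ u ∈ Ico a b, ∀ i, V u i = V a i ∨ V u i = -V a i) (hVa : ‖V a‖ ≤ R)
    (hjump : ∀ s ∈ Ioo a b, ∀ p q : ℝ,
      Tendsto (fun u => ⟪V u, gradient U (X s)⟫) (𝓝[>] s) (𝓝 p) →
      Tendsto (fun u => ⟪V u, gradient U (X s)⟫) (𝓝[<] s) (𝓝 q) → p ≤ q) :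
    ∀ t ∈ Icc a b, U (X t) ≤ U (X a) + ⟪V a, gradient U (X a)⟫ * (t - a)
      + L * R ^ 2 / 2 * (t - a) ^ 2 :=
  le_add_inner_gradient_mul_add_sq hU hL hL0 hXc hX hV
    ((finite_setOf_forall_eq_or_eq_neg (V a)).subset <| image_subset_iff.2 fun u hu =>
      hflip u (Ioo_subset_Ico_self hu))
    (fun u hu => (norm_eq_of_forall_eq_or_eq_neg (hflip u hu)).trans_le hVa) hjump

end SignFlips

theorem potential_le_of_zigzag {d : ℕ} {U : EuclideanSpace ℝ (Fin d) → ℝ} {L T : ℝ} {N : ℕ}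
    {Ts : ℕ → ℝ} {X V : ℝ → EuclideanSpace ℝ (Fin d)} (hU : ContDiff ℝ 2 U)
    (hL : ∀ x w, fderiv ℝ (fderiv ℝ U) x w w ≤ L * ‖w‖ ^ 2) (hL0 : 0 < L) (hT : 0 < T)
    (hU0 : ∀ y, 0 ≤ U y) (hXc : Continuous X) (hTs : MonotoneOn Ts (Iic (N + 1)))
    (hTs0 : Ts 0 = 0) (hTsN : Ts (N + 1) = T)
    (hX : ∀ s ∈ Ico 0 T, HasDerivWithinAt X (V s) (Ici s) s)
    (hV : ∀ s ∈ Ico 0 T, ∀ᶠ u in 𝓝[≥] s, V u = V s)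
    (hflip : ∀ k ≤ N, ∀ t ∈ Ico (Ts k) (Ts (k + 1)) ∩ Ico 0 T, ∀ i,
      V t i = V (Ts k) i ∨ V t i = -V (Ts k) i)
    (hjump : ∀ k ≤ N, ∀ s ∈ Ioo (Ts k) (Ts (k + 1)), ∀ p q : ℝ,
      Tendsto (fun u => ⟪V u, gradient U (X s)⟫) (𝓝[>] s) (𝓝 p) →
      Tendsto (fun u => ⟪V u, gradient U (X s)⟫) (𝓝[<] s) (𝓝 q) → p ≤ q)
    (hslope : ∀ k ≤ N, |⟪V (Ts k), gradient U (X (Ts k))⟫|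
      ≤ √(d / (√L * T)) * ‖gradient U (X (Ts k))‖)
    (hVnorm : ∀ k ≤ N, ‖V (Ts k)‖ ≤ 2 * √d)
    (hgaps : ∑ k ∈ Finset.range (N + 1), (Ts (k + 1) - Ts k) ^ 2 ≤ 4 * T / √L) :
    ∀ t ∈ Icc 0 T, U (X t) ≤ 2 * (U (X 0) + 9 * (√L * T * d)) := by
  have hinterval : ∀ k < N + 1, ∀ t ∈ Icc (Ts k) (Ts (k + 1)), U (X t) ≤ U (X (Ts k))
      + ⟪V (Ts k), gradient U (X (Ts k))⟫ * (t - Ts k) + L * (2 * √d) ^ 2 / 2 * (t - Ts k) ^ 2 := by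
    intro k hk
    have hsub : Ico (Ts k) (Ts (k + 1)) ⊆ Ico 0 T := Ico_subset_Ico
      (hTs0 ▸ hTs (by simp) (by simp; omega) k.zero_le)
      (hTsN ▸ hTs (by simpa using hk) (by simp) hk)
    exact le_add_inner_gradient_mul_add_sq_of_sign_flips hU hL hL0.le hXc
      (fun s hs => hX s (hsub hs)) (fun s hs => hV s (hsub hs))
      (fun u hu => hflip k (by omega) u ⟨hu, hsub hu⟩) (hVnorm k (by omega)) (hjump k (by omega))
  have hslope' : ∀ k < N + 1,
      ⟪V (Ts k), gradient U (X (Ts k))⟫ * T ≤ √L * T * d + U (X (Ts k)) / 2 := fun k hk =>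
    (inner_gradient_mul_le hU hL hL0 hU0 (hslope k (by omega)) hT.le).trans_eq <| by
      rw [mul_pow, Real.sq_sqrt (by positivity)]
      field_simp
      linear_combination (-(2 * T * d)) * Real.sq_sqrt hL0.le
  have hgaps' : L * (2 * √d) ^ 2 / 2 * ∑ k ∈ Finset.range (N + 1), (Ts (k + 1) - Ts k) ^ 2
      ≤ 8 * (√L * T * d) := by
    calc _ ≤ L * (2 * √d) ^ 2 / 2 * (4 * T / √L) := by gcongr
      _ = 8 * (√L * T * d) := by
        rw [mul_pow, Real.sq_sqrt (Nat.cast_nonneg _)]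
        field_simp
        linear_combination (-(8 * d)) * Real.sq_sqrt hL0.le
  intro t ht
  have := le_of_forall_le_on_partition_of_slope_le (g := fun t => U (X t)) hT (by positivity)
    (by positivity) hTs hTs0 hTsN (hU0 _) hinterval hslope' t ht
  linarith

/-- Lemma 1 of the paper: there is a universal constant `C` such that for any
zigzag-type trajectory `X` with piecewise constant velocity `V` on `[0, T]`, refresh times
`0 = T_0 < T_1 < ⋯ < T_N ≤ T` (`T_{N+1} := T`), whose velocity components between refresh
times only flip signs and whose flips do not increase `t ↦ V(t)·∇U(X(t))`, under Assumption 1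
on `U` together with conditions (a)–(e), one has `sup_{t∈[0,T]} U(X(t)) ≤ C√L·T·d`. -/
theorem sup_U_along_zigzag_trajectory :
    ∃ C : ℝ, 0 < C ∧
      ∀ (d : ℕ), 1 ≤ d →
      ∀ (m L T : ℝ), 0 < m → m ≤ 1 → 1 ≤ L → 0 < T → L / m ≤ Real.sqrt L * T →
      ∀ (U : EuclideanSpace ℝ (Fin d) → ℝ), ContDiff ℝ 2 U →
      (∀ x w : EuclideanSpace ℝ (Fin d),
        m * ‖w‖ ^ 2 ≤ iteratedFDeriv ℝ 2 U x ![w, w] ∧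
        iteratedFDeriv ℝ 2 U x ![w, w] ≤ L * ‖w‖ ^ 2) →
      U 0 = 0 → (∀ y ≠ 0, 0 < U y) →
      ∀ (N : ℕ), 1 ≤ N →
      ∀ (Ts : ℕ → ℝ), Ts 0 = 0 → (∀ k < N, Ts k < Ts (k + 1)) → Ts N ≤ T → Ts (N + 1) = T →
      ∀ (X : ℝ → EuclideanSpace ℝ (Fin d)) (V : ℝ → EuclideanSpace ℝ (Fin d)),
      -- X is Lipschitz and piecewise linear with right derivative V, V piecewise constant
      (∃ K : NNReal, LipschitzWith K X) →
      (∀ s ∈ Set.Ico (0 : ℝ) T, HasDerivWithinAt X (V s) (Set.Ici s) s) →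
      (∀ s ∈ Set.Ico (0 : ℝ) T, ∃ ε > 0, ∀ u ∈ Set.Ico s (s + ε), V u = V s) →
      -- (i) between refresh times each velocity component only flips its sign
      (∀ k ≤ N, ∀ t ∈ Set.Ico (Ts k) (Ts (k + 1)) ∩ Set.Ico (0 : ℝ) T, ∀ i : Fin d,
        V t i = V (Ts k) i ∨ V t i = -(V (Ts k) i)) →
      -- (ii) at every discontinuity of V strictly between refresh times,
      -- V·∇U(X(s)) does not increase
      (∀ k ≤ N, ∀ s ∈ Set.Ioo (Ts k) (Ts (k + 1)), ∀ a b : ℝ,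
        Tendsto (fun u => ⟪V u, gradient U (X s)⟫) (nhdsWithin s (Set.Ioi s)) (nhds a) →
        Tendsto (fun u => ⟪V u, gradient U (X s)⟫) (nhdsWithin s (Set.Iio s)) (nhds b) →
        a ≤ b) →
      -- (a) the number of refreshments is comparable to √L·T
      (1 / 2 * (Real.sqrt L * T) ≤ N ∧ (N : ℝ) ≤ 3 / 2 * (Real.sqrt L * T)) →
      -- (b) refreshed velocities are nearly orthogonal to the gradient
      (∀ k ≤ N, |⟪V (Ts k), gradient U (X (Ts k))⟫|
        ≤ Real.sqrt (d / (Real.sqrt L * T)) * ‖gradient U (X (Ts k))‖) →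
      -- (c) refreshed velocities have norm at most 2√d
      (∀ k ≤ N, ‖V (Ts k)‖ ≤ 2 * Real.sqrt d) →
      -- (d) initial potential bound
      U (X 0) ≤ (L / m) * d →
      -- (e) sum of squares of inter-refresh durations
      (∑ k ∈ Finset.range (N + 1), (Ts (k + 1) - Ts k) ^ 2) ≤ 4 * T / Real.sqrt L →
      ∀ t ∈ Set.Icc (0 : ℝ) T, U (X t) ≤ C * Real.sqrt L * T * d := by
  refine ⟨20, by norm_num, ?_⟩
  intro d _ m L T _ _ hL hT hκ U hU hUhess hU0 hUpos N _ Ts hTs0 hTsinc hTsN hTsN1 X V hlip hX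
    hV hflip hjump _ hslope hVnorm hX0 hgaps t ht
  obtain ⟨K, hK⟩ := hlip
  have hhess : ∀ x w, fderiv ℝ (fderiv ℝ U) x w w ≤ L * ‖w‖ ^ 2 := fun x w => by
    simpa [iteratedFDeriv_two_apply] using (hUhess x w).2
  have hUnonneg : ∀ y, 0 ≤ U y := fun y => by
    rcases eq_or_ne y 0 with rfl | hy
    exacts [hU0.ge, (hUpos y hy).le]
  have hmono : MonotoneOn Ts (Iic (N + 1)) := monotoneOn_of_le_add_one ordConnected_Iic
    fun k _ _ hk => by
      rcases (Nat.le_of_succ_le_succ (mem_Iic.1 hk)).lt_or_eq with h | rfl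
      exacts [(hTsinc k h).le, hTsN1 ▸ hTsN]
  have hV' : ∀ s ∈ Ico 0 T, ∀ᶠ u in 𝓝[≥] s, V u = V s := fun s hs => by
    obtain ⟨ε, hε, hconst⟩ := hV s hs
    exact mem_nhdsGE_iff_exists_Ico_subset.2 ⟨s + ε, by simpa using hε, hconst⟩
  have hX0' : U (X 0) ≤ √L * T * d :=
    hX0.trans (mul_le_mul_of_nonneg_right hκ (Nat.cast_nonneg _))
  have := potential_le_of_zigzag hU hhess (by linarith) hT hUnonneg hK.continuous hmono hTs0
    hTsN1 hX hV' hflip hjump hslope hVnorm hgaps t ht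
  linarith
end
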